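/- arXiv:0811.3870 — 6 statements merged into one kernel-verified Lean document; each statement's English description precedes it below -/
import Mathlib

section
/- Let z = (A,B,x,y) ∈ M_n(ℂ) × M_n(ℂ) × ℂⁿ × (ℂⁿ)* satisfy the hyperkähler moment map equations [A,A*] + [B,B*] + x x* − y* y = t·Id with t > 0 and [A,B] + x y = 0. Then y = 0. -/
/-!
Let `K` be the space of vectors `v` with `y w(A, B) v = 0` for every word `w` in `A` and `B`:
it is invariant under `A` and `B` and lies in `ker y`. It also contains the image of `x`. Indeed,
as `x y = [B, A]`, the scalars `c(w) = y w(A, B) x` satisfy `c(u BA v) = c(u AB v) + c(u) c(v)`, so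
by induction on the length, `c(w)` only depends on the numbers `a`, `b` of letters `A`, `B` in `w`;
then expanding `c(AᵃBᵇ) = tr(AᵃBᵇ[B, A])` with the cyclicity of the trace gives `c = -b c`.
Finally, if `Q` is the orthogonal projection onto `Kᗮ`, compressing the real moment map equation
by `Q` and taking traces gives `t ‖Q‖² = -‖(1 - Q) A Q‖² - ‖(1 - Q) B Q‖² - ‖y Q‖² ≤ 0`, so
`K` is the whole space and `y = 0`.
-/

open Matrix Finset
open scoped ComplexOrder

theorem pow_mul_sub_mul_pow {α : Type*} [Ring α] (a b : α) (n : ℕ) :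
    b ^ n * a - a * b ^ n = ∑ i ∈ range n, b ^ i * (b * a - a * b) * b ^ (n - 1 - i) := by
  have h := congrArg (fun f : Module.End ℕ α => f a)
    ((LinearMap.commute_mulLeft_right b b).geom_sum₂_mul n)
  simpa [LinearMap.pow_mulLeft, LinearMap.pow_mulRight, mul_assoc, LinearMap.sum_apply] using h.symm

theorem List.perm_replicate_count_bool (l : List Bool) :
    l.Perm (List.replicate (l.count true) true ++ List.replicate (l.count false) false) :=
  (List.perm_replicate_append_replicate (by decide)).2
    ⟨rfl, rfl, fun c _ => by cases c <;> simp⟩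

namespace Matrix

variable {ι R : Type*} [Fintype ι] [CommRing R]

theorem trace_mul_mul_self_of_isIdempotentElem {Q : Matrix ι ι R}
    (hQ : IsIdempotentElem Q) (X : Matrix ι ι R) : trace (Q * X * Q) = trace (Q * X) := by
  rw [trace_mul_comm, ← Matrix.mul_assoc, hQ.eq]

theorem trace_mul_of_fin_one (M N : Matrix (Fin 1) (Fin 1) R) :
    trace (M * N) = trace M * trace N := by
  simp [trace_fin_one, mul_apply]

variable [DecidableEq ι]

theorem trace_compress_commutator_of_isIdempotentElem [StarRing R] {Q C : Matrix ι ι R}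
    (hQ : IsIdempotentElem Q) (hQH : Q.IsHermitian) (hC : Q * C * (1 - Q) = 0) :
    trace (Q * (C * Cᴴ) * Q) - trace (Q * (Cᴴ * C) * Q) =
      -trace (((1 - Q) * C * Q)ᴴ * ((1 - Q) * C * Q)) := by
  have hQC : Q * C * Q = Q * C := by
    rw [Matrix.mul_sub, Matrix.mul_one, sub_eq_zero] at hC; exact hC.symm
  have h1 : trace (Q * (C * Cᴴ) * Q) = trace (Q * Cᴴ * Q * C) := by
    rw [trace_mul_mul_self_of_isIdempotentElem hQ, ← Matrix.mul_assoc, ← hQC,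
      trace_mul_comm _ Cᴴ, show Q * Cᴴ * Q * C = Q * (Cᴴ * Q * C) by simp only [Matrix.mul_assoc],
      trace_mul_comm Q]
    simp only [Matrix.mul_assoc]
  have h2 : ((1 - Q) * C * Q)ᴴ * ((1 - Q) * C * Q) = Q * (Cᴴ * C) * Q - Q * Cᴴ * Q * C * Q := by
    rw [conjTranspose_mul, conjTranspose_mul, hQH.eq, conjTranspose_sub, conjTranspose_one, hQH.eq]
    calc _ = Q * Cᴴ * ((1 - Q) * (1 - Q)) * C * Q := by simp only [Matrix.mul_assoc]
      _ = _ := by rw [hQ.one_sub.eq]; noncomm_ring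
  rw [h1, h2, trace_sub, show Q * Cᴴ * Q * C * Q = Q * (Cᴴ * Q * C) * Q by
    simp only [Matrix.mul_assoc], trace_mul_mul_self_of_isIdempotentElem hQ (Cᴴ * Q * C)]
  simp only [Matrix.mul_assoc]
  ring

def evalWord (A B : Matrix ι ι R) (w : List Bool) : Matrix ι ι R :=
  (w.map (cond · A B)).prod

section Words

variable (A B : Matrix ι ι R) (x : Matrix ι (Fin 1) R) (y : Matrix (Fin 1) ι R)

@[simp] theorem evalWord_append (u v : List Bool) :
    evalWord A B (u ++ v) = evalWord A B u * evalWord A B v := by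
  simp [evalWord]

@[simp] theorem evalWord_replicate (c : Bool) (k : ℕ) :
    evalWord A B (List.replicate k c) = cond c A B ^ k := by
  simp [evalWord, List.map_replicate, List.prod_replicate]

def wordCoeff (w : List Bool) : R := trace (y * evalWord A B w * x)

variable {A B x y}

theorem wordCoeff_swap (hxy : x * y = B * A - A * B) (u v : List Bool) :
    wordCoeff A B x y (u ++ false :: true :: v) =
      wordCoeff A B x y (u ++ true :: false :: v) + wordCoeff A B x y u * wordCoeff A B x y v := by
  have hBA : B * A = A * B + x * y := by rw [hxy]; abel
  have : y * evalWord A B (u ++ false :: true :: v) * x =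
      y * evalWord A B (u ++ true :: false :: v) * x +
        (y * evalWord A B u * x) * (y * evalWord A B v * x) := by
    simp only [evalWord, List.map_append, List.map_cons, List.prod_append, List.prod_cons,
      cond_true, cond_false]
    rw [← mul_assoc B, hBA]
    simp only [Matrix.mul_add, Matrix.add_mul, Matrix.mul_assoc]
  rw [wordCoeff, this, trace_add, trace_mul_of_fin_one]
  rfl

theorem wordCoeff_eq_of_perm (hxy : x * y = B * A - A * B) {k : ℕ}
    (hk : ∀ u : List Bool, u.length < k → wordCoeff A B x y u = 0) {l l' : List Bool}
    (h : l.Perm l') (hl : l.length = k) : wordCoeff A B x y l = wordCoeff A B x y l' := by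
  suffices ∀ u, (u ++ l).length = k → wordCoeff A B x y (u ++ l) = wordCoeff A B x y (u ++ l') by
    simpa using this [] hl
  clear hl
  induction h with
  | nil => exact fun _ _ => rfl
  | cons a _ ih => exact fun u hu => by simpa using ih (u ++ [a]) (by simpa using hu)
  | swap a b l =>
    intro u hu
    have hu' : wordCoeff A B x y u = 0 := hk u (by simp at hu; omega)
    cases a <;> cases b
    · rfl
    · simp [wordCoeff_swap hxy, hu']
    · simp [wordCoeff_swap hxy, hu']
    · rfl
  | trans h₁ _ ih₁ ih₂ =>
    exact fun u hu => (ih₁ u hu).trans (ih₂ u (by simpa [h₁.length_eq] using hu))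

theorem wordCoeff_replicate_eq_neg_mul (hxy : x * y = B * A - A * B) (a b : ℕ)
    (hcount : ∀ l : List Bool, l.count true = a → l.count false = b →
      wordCoeff A B x y l = wordCoeff A B x y (List.replicate a true ++ List.replicate b false)) :
    wordCoeff A B x y (List.replicate a true ++ List.replicate b false) =
      -b * wordCoeff A B x y (List.replicate a true ++ List.replicate b false) := by
  set s := wordCoeff A B x y (List.replicate a true ++ List.replicate b false)
  have hterm : ∀ i ∈ range b, trace (A ^ a * (B ^ i * (x * y) * B ^ (b - 1 - i)) * B) = s := by
    intro i hi
    have hi : i < b := mem_range.mp hi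
    rw [← hcount (List.replicate (b - i) false ++ List.replicate a true ++ List.replicate i false)
      (by simp [List.count_replicate]) (by simp [List.count_replicate]; omega)]
    have : B ^ (b - 1 - i) * B = B ^ (b - i) := by rw [← pow_succ]; congr 1; omega
    simp only [wordCoeff, evalWord_append, evalWord_replicate, cond_true, cond_false]
    rw [← this, show A ^ a * (B ^ i * (x * y) * B ^ (b - 1 - i)) * B =
      (A ^ a * B ^ i * x) * (y * B ^ (b - 1 - i) * B) by simp only [Matrix.mul_assoc],
      trace_mul_comm]
    simp only [Matrix.mul_assoc]
  have hcomm : B ^ b * A = A * B ^ b + ∑ i ∈ range b, B ^ i * (x * y) * B ^ (b - 1 - i) := by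
    rw [← sub_eq_iff_eq_add', pow_mul_sub_mul_pow, hxy]
  calc s = trace ((B * A - A * B) * (A ^ a * B ^ b)) := by
        simp only [s, wordCoeff, evalWord_append, evalWord_replicate, cond_true, cond_false]
        rw [trace_mul_cycle, hxy]
    _ = trace (A ^ a * B ^ b * (B * A)) - trace (A ^ a * (B ^ b * A) * B) := by
        rw [Matrix.sub_mul, trace_sub, trace_mul_comm (B * A), trace_mul_comm (A * B)]
        simp only [Matrix.mul_assoc]
    _ = -b * s := by
        rw [hcomm, Matrix.mul_add, Matrix.add_mul, Finset.mul_sum, Finset.sum_mul, trace_add,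
          trace_sum, sum_congr rfl hterm, sum_const, card_range, nsmul_eq_mul]
        have hcycle : trace (A ^ a * B ^ b * (B * A)) = trace (A ^ a * (A * B ^ b) * B) := by
          rw [← Matrix.mul_assoc, trace_mul_comm, ← Matrix.mul_assoc (A ^ a), pow_mul_comm']
          simp only [Matrix.mul_assoc]
        rw [hcycle]
        ring

theorem wordCoeff_eq_zero [NoZeroDivisors R] [CharZero R] (hxy : x * y = B * A - A * B)
    (w : List Bool) : wordCoeff A B x y w = 0 := by
  induction hk : w.length using Nat.strong_induction_on generalizing w with
  | _ k ih =>
  set a := w.count true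
  set b := w.count false
  have hsort := w.perm_replicate_count_bool
  have hperm : ∀ l, l.count true = a → l.count false = b → wordCoeff A B x y l =
      wordCoeff A B x y (List.replicate a true ++ List.replicate b false) := by
    intro l ha hb
    have hl := l.perm_replicate_count_bool
    rw [ha, hb] at hl
    exact wordCoeff_eq_of_perm hxy (fun u hu => ih _ hu u rfl) hl
      (by rw [hl.length_eq, ← hsort.length_eq, hk])
  have hs := wordCoeff_replicate_eq_neg_mul hxy a b hperm
  rw [hperm w rfl rfl]
  exact (mul_eq_zero.1 (by linear_combination hs : (b + 1 : R) * _ = 0)).resolve_left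
    (Nat.cast_add_one_ne_zero b)

theorem mul_evalWord_mul_eq_zero [NoZeroDivisors R] [CharZero R] (hxy : x * y = B * A - A * B)
    (w : List Bool) : y * evalWord A B w * x = 0 := by
  ext i j
  simpa [Subsingleton.elim i 0, Subsingleton.elim j 0, wordCoeff, trace_fin_one] using
    wordCoeff_eq_zero hxy w

end Words

section Stability

variable {κ 𝕜 : Type*} [Fintype κ] [RCLike 𝕜]

theorem eq_one_of_moment_map {t : ℝ} (ht : 0 < t) {A B : Matrix ι ι 𝕜} {x : Matrix ι κ 𝕜}
    {y : Matrix κ ι 𝕜}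
    (hreal : A * Aᴴ - Aᴴ * A + (B * Bᴴ - Bᴴ * B) + x * xᴴ - yᴴ * y = (t : 𝕜) • 1)
    {P : Matrix ι ι 𝕜} (hP : IsIdempotentElem P) (hPH : P.IsHermitian) (hPx : P * x = x)
    (hPA : (1 - P) * A * P = 0) (hPB : (1 - P) * B * P = 0) : P = 1 := by
  set Q := 1 - P
  have hQ : IsIdempotentElem Q := hP.one_sub
  have hQH : Q.IsHermitian := isHermitian_one.sub hPH
  have hP' : P = 1 - Q := (sub_sub_cancel 1 P).symm
  have hQx : Q * x = 0 := by rw [Matrix.sub_mul, Matrix.one_mul, hPx, sub_self]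
  have key := congrArg (fun M => trace (Q * M * Q)) hreal
  simp only [Matrix.mul_add, Matrix.add_mul, Matrix.mul_sub, Matrix.sub_mul, trace_add,
    trace_sub] at key
  have hx : trace (Q * (x * xᴴ) * Q) = 0 := by
    rw [← Matrix.mul_assoc, hQx, Matrix.zero_mul, Matrix.zero_mul, trace_zero]
  have hy : trace (Q * (yᴴ * y) * Q) = trace ((y * Q)ᴴ * (y * Q)) := by
    rw [conjTranspose_mul, hQH.eq]; simp only [Matrix.mul_assoc]
  have htQ : trace (Q * ((t : 𝕜) • 1) * Q) = t * trace (Qᴴ * Q) := by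
    rw [Matrix.mul_smul, Matrix.mul_one, Matrix.smul_mul, trace_smul, hQH.eq, smul_eq_mul]
  rw [trace_compress_commutator_of_isIdempotentElem hQ hQH (by rwa [← hP']),
    trace_compress_commutator_of_isIdempotentElem hQ hQH (by rwa [← hP']), hx, hy, htQ] at key
  have hQQ := (posSemidef_conjTranspose_mul_self Q).trace_nonneg
  have hPAQ := (posSemidef_conjTranspose_mul_self ((1 - Q) * A * Q)).trace_nonneg
  have hPBQ := (posSemidef_conjTranspose_mul_self ((1 - Q) * B * Q)).trace_nonneg
  have hyQ := (posSemidef_conjTranspose_mul_self (y * Q)).trace_nonneg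
  have htq : (t : 𝕜) * trace (Qᴴ * Q) = 0 := by
    refine le_antisymm ?_ (mul_nonneg (by exact_mod_cast ht.le) hQQ)
    rw [← key, add_zero, ← neg_add, sub_nonpos]
    exact (neg_nonpos.2 (add_nonneg hPAQ hPBQ)).trans hyQ
  have hQ0 : Q = 0 := trace_conjTranspose_mul_self_eq_zero_iff.1
    ((mul_eq_zero.1 htq).resolve_left (by exact_mod_cast ht.ne'))
  rw [hP', hQ0, sub_zero]

theorem mul_eq_self_of_forall_mem {S : Submodule 𝕜 (EuclideanSpace 𝕜 ι)} [DecidableEq κ]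
    {M : Matrix ι κ 𝕜} (hM : ∀ v, toEuclideanLin M v ∈ S) :
    (toEuclideanCLM (𝕜 := 𝕜) (n := ι)).symm S.starProjection * M = M := by
  apply toEuclideanLin.injective
  rw [toLpLin_mul_same, ← coe_toEuclideanCLM_eq_toEuclideanLin, StarAlgEquiv.apply_symm_apply]
  ext1 v
  exact Submodule.starProjection_eq_self_iff.2 (hM v)

theorem eq_top_of_moment_map [DecidableEq κ] {t : ℝ} (ht : 0 < t) {A B : Matrix ι ι 𝕜}
    {x : Matrix ι κ 𝕜} {y : Matrix κ ι 𝕜}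
    (hreal : A * Aᴴ - Aᴴ * A + (B * Bᴴ - Bᴴ * B) + x * xᴴ - yᴴ * y = (t : 𝕜) • 1)
    {S : Submodule 𝕜 (EuclideanSpace 𝕜 ι)} (hA : ∀ v ∈ S, toEuclideanLin A v ∈ S)
    (hB : ∀ v ∈ S, toEuclideanLin B v ∈ S) (hx : ∀ v, toEuclideanLin x v ∈ S) : S = ⊤ := by
  set P := (toEuclideanCLM (𝕜 := 𝕜) (n := ι)).symm S.starProjection
  have hPS : toEuclideanLin P = S.starProjection := by
    rw [← coe_toEuclideanCLM_eq_toEuclideanLin, StarAlgEquiv.apply_symm_apply]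
  have hmem (v) : toEuclideanLin P v ∈ S := by rw [hPS]; exact S.starProjection_apply_mem v
  have hinv {C : Matrix ι ι 𝕜} (hC : ∀ v ∈ S, toEuclideanLin C v ∈ S) : (1 - P) * C * P = 0 := by
    rw [Matrix.sub_mul, Matrix.one_mul, Matrix.sub_mul, Matrix.mul_assoc,
      mul_eq_self_of_forall_mem (M := C * P) fun v => by
        rw [toLpLin_mul_same]; exact hC _ (hmem v), sub_self]
  have hP1 : P = 1 := eq_one_of_moment_map ht hreal
    (S.isIdempotentElem_starProjection.map _)
    ((isSelfAdjoint_starProjection S).map (toEuclideanCLM (𝕜 := 𝕜) (n := ι)).symm).isHermitian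
    (mul_eq_self_of_forall_mem hx) (hinv hA) (hinv hB)
  have hproj : S.starProjection = 1 := by
    simpa [P] using congrArg (toEuclideanCLM (𝕜 := 𝕜) (n := ι)) hP1
  rw [← S.range_starProjection, hproj]
  exact LinearMap.range_id

end Stability

section WordKer

variable {𝕜 : Type*} [RCLike 𝕜] {A B : Matrix ι ι 𝕜} {x : Matrix ι (Fin 1) 𝕜} {y : Matrix (Fin 1) ι 𝕜}

variable (A B y) in
/-- The largest subspace of `ker y` invariant under `A` and `B`. -/
noncomputable def wordKer : Submodule 𝕜 (EuclideanSpace 𝕜 ι) :=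
  ⨅ w, LinearMap.ker (toEuclideanLin (y * evalWord A B w))

theorem toEuclideanLin_cond_mem_wordKer (c : Bool) :
    ∀ v ∈ wordKer A B y, toEuclideanLin (cond c A B) v ∈ wordKer A B y := by
  intro v hv
  simp only [wordKer, Submodule.mem_iInf, LinearMap.mem_ker] at hv ⊢
  intro w
  simpa [evalWord, Matrix.mul_assoc] using hv (w ++ [c])

theorem toEuclideanLin_mem_wordKer (hxy : x * y = B * A - A * B) (v : EuclideanSpace 𝕜 (Fin 1)) :
    toEuclideanLin x v ∈ wordKer A B y := by
  simp only [wordKer, Submodule.mem_iInf, LinearMap.mem_ker]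
  intro w
  rw [← LinearMap.comp_apply, ← toLpLin_mul_same, mul_evalWord_mul_eq_zero hxy, map_zero,
    LinearMap.zero_apply]

end WordKer

end Matrix

/-- Nakajima's vanishing: any solution of the hyperkähler moment map equations
at level `t > 0` has `y = 0`. -/
theorem stmt_0 (n : ℕ) (t : ℝ) (ht : 0 < t)
    (A B : Matrix (Fin n) (Fin n) ℂ)
    (x : Matrix (Fin n) (Fin 1) ℂ) (y : Matrix (Fin 1) (Fin n) ℂ)
    (hreal : A * Aᴴ - Aᴴ * A + (B * Bᴴ - Bᴴ * B) + x * xᴴ - yᴴ * y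
      = (t : ℂ) • (1 : Matrix (Fin n) (Fin n) ℂ))
    (hcplx : A * B - B * A + x * y = 0) :
    y = 0 := by
  have hxy : x * y = B * A - A * B := by rw [← sub_eq_zero, ← hcplx]; abel
  have hK : wordKer A B y = ⊤ := eq_top_of_moment_map ht hreal
    (toEuclideanLin_cond_mem_wordKer true) (toEuclideanLin_cond_mem_wordKer false)
    (toEuclideanLin_mem_wordKer hxy)
  simpa [evalWord] using LinearMap.ker_eq_top.1 (iInf_eq_top.1 hK [])
end

section
/- Let (A,B,x,y) ∈ M_n(ℂ)⁴-data satisfy [A,A*] + [B,B*] + x x* − y* y = 0 and [A,B] + x y = 0 (the t = 0 moment map equations). Then x = 0, y = 0, [A,B] = 0, [A,A*] = 0, and [B,B*] = 0; in particular A and B are commuting normal matrices. -/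
/-!
Write `[A, B] = -x y`. Using only this relation and the fact that `x y` has rank one, every
scalar `y Bᵖ Aᑫ Bʳ x` vanishes (induction on the degree, the top-degree case reducing to
`(1 + j) · y Aᑫ Bʲ x = 0` by cyclicity of the trace). Hence the span of the vectors `Aⁱ Bʲ x` is
invariant under `A` and `B`, contains `x` and is killed by `y`. If `P` is the orthogonal projection
onto it, the trace of `(1 - P)` times the real equation is
`-‖P A (1 - P)‖² - ‖P B (1 - P)‖² - ‖y‖² = 0`, so `y = 0`; the trace of the real equation then
gives `x = 0`. Finally, for commuting `A` and `B` one has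
`tr ([A, A*] [B, B*]) = ‖[A, B*]‖²`, and `[B, B*] = -[A, A*]` forces `[A, A*] = 0`.
-/

open Matrix Finset

theorem mul_pow_eq_pow_mul_add_sum {R : Type*} [Ring R] {a b d : R} (h : b * a = a * b + d)
    (q : ℕ) : b * a ^ q = a ^ q * b + ∑ k ∈ range q, a ^ k * d * a ^ (q - 1 - k) := by
  induction q with
  | zero => simp
  | succ q ih =>
    have hshift : ∀ k ∈ range q, a ^ k * d * a ^ (q - 1 - k) * a = a ^ k * d * a ^ (q - k) :=
      fun k hk => by
        rw [mul_assoc, ← pow_succ]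
        congr 3
        have := mem_range.mp hk
        omega
    rw [sum_range_succ, pow_succ, ← mul_assoc, ih, add_mul, sum_mul, sum_congr rfl hshift,
      mul_assoc, h]
    simp only [add_tsub_cancel_right, tsub_self, pow_zero, mul_one, mul_add, ← mul_assoc]
    abel

theorem pow_mul_eq_mul_pow_add_sum {R : Type*} [Ring R] {a b d : R} (h : b * a = a * b + d)
    (j : ℕ) : b ^ j * a = a * b ^ j + ∑ k ∈ range j, b ^ k * d * b ^ (j - 1 - k) := by
  have h' : a * b = b * a + -d := by rw [h]; abel
  simp only [mul_pow_eq_pow_mul_add_sum h' j, mul_neg, neg_mul, sum_neg_distrib]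
  abel

namespace Matrix

section RankOneCommutator

variable {K m : Type*} [CommRing K] [Fintype m] [DecidableEq m]
  {A B : Matrix m m K} {x : Matrix m (Fin 1) K} {y : Matrix (Fin 1) m K}

theorem mul_pow_succ_mul_mul_eq (hc : B * A = A * B + x * y) {L p q : ℕ}
    (hL : ∀ p q r, p + q + r < L → y * (B ^ p * A ^ q * B ^ r) * x = 0)
    (h : p + q < L) (r : ℕ) :
    y * (B ^ (p + 1) * A ^ q * B ^ r) * x = y * (B ^ p * A ^ q * B ^ (r + 1)) * x := by
  have hexpand : B ^ (p + 1) * A ^ q * B ^ r = B ^ p * A ^ q * B ^ (r + 1)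
      + ∑ k ∈ range q, B ^ p * A ^ k * (x * y) * (A ^ (q - 1 - k) * B ^ r) := by
    rw [pow_succ, Matrix.mul_assoc (B ^ p), mul_pow_eq_pow_mul_add_sum hc]
    simp only [Matrix.mul_add, Matrix.add_mul, Matrix.mul_sum, Matrix.sum_mul, pow_succ',
      Matrix.mul_assoc]
  have hlower : ∀ k ∈ range q,
      y * (B ^ p * A ^ k * (x * y) * (A ^ (q - 1 - k) * B ^ r)) * x = 0 := by
    intro k hk
    have hk : p + k + 0 < L := by have := mem_range.mp hk; omega
    have hpk := hL p k 0 hk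
    rw [pow_zero, Matrix.mul_one] at hpk
    calc y * (B ^ p * A ^ k * (x * y) * (A ^ (q - 1 - k) * B ^ r)) * x
        = y * (B ^ p * A ^ k) * x * (y * (A ^ (q - 1 - k) * B ^ r) * x) := by
          simp only [Matrix.mul_assoc]
      _ = 0 := by rw [hpk, Matrix.zero_mul]
  rw [hexpand, Matrix.mul_add, Matrix.add_mul, Matrix.mul_sum, Matrix.sum_mul,
    sum_eq_zero hlower, add_zero]

theorem mul_pow_mul_pow_mul_eq (hc : B * A = A * B + x * y) {L : ℕ}
    (hL : ∀ p q r, p + q + r < L → y * (B ^ p * A ^ q * B ^ r) * x = 0)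
    (p q r : ℕ) (h : p + q ≤ L) :
    y * (B ^ p * A ^ q * B ^ r) * x = y * (A ^ q * B ^ (p + r)) * x := by
  induction p generalizing r with
  | zero => simp
  | succ p ih =>
    rw [mul_pow_succ_mul_mul_eq hc hL (by omega), ih (r + 1) (by omega)]
    ring_nf

theorem mul_pow_mul_pow_mul_eq_zero_of_forall_lt [NoZeroDivisors K] [CharZero K]
    (hc : B * A = A * B + x * y) {L : ℕ}
    (hL : ∀ p q r, p + q + r < L → y * (B ^ p * A ^ q * B ^ r) * x = 0)
    (q j : ℕ) (h : q + j = L) : y * (A ^ q * B ^ j) * x = 0 := by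
  -- `c = tr (Aᑫ Bʲ [B, A])`, and commuting `A` past `Bʲ` produces `j` more copies of `c`.
  have hxy : x * y = B * A - A * B := by rw [hc]; abel
  have hdiff : (y * (A ^ q * B ^ j) * x).trace
      = (A ^ q * B ^ j * (B * A)).trace - (A ^ q * B ^ j * (A * B)).trace := by
    rw [trace_mul_cycle, trace_mul_comm, hxy, Matrix.mul_sub, trace_sub]
  set c := (y * (A ^ q * B ^ j) * x).trace
  have hBA : (A ^ q * B ^ j * (B * A)).trace = (A ^ (q + 1) * B ^ (j + 1)).trace := by
    rw [← Matrix.mul_assoc, trace_mul_comm, pow_succ', pow_succ]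
    simp only [Matrix.mul_assoc]
  have hterm : ∀ k ∈ range j,
      (A ^ q * (B ^ k * (x * y) * B ^ (j - 1 - k)) * B).trace = c := by
    intro k hk
    have hk := mem_range.mp hk
    have hpow : B ^ (j - k) = B ^ (j - 1 - k) * B := by rw [← pow_succ]; congr 1; omega
    calc (A ^ q * (B ^ k * (x * y) * B ^ (j - 1 - k)) * B).trace
        = (y * (B ^ (j - k) * A ^ q * B ^ k) * x).trace := by
          rw [trace_mul_cycle y _ x, hpow, show A ^ q * (B ^ k * (x * y) * B ^ (j - 1 - k)) * B
            = A ^ q * B ^ k * (x * y * (B ^ (j - 1 - k) * B)) by simp only [Matrix.mul_assoc],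
            trace_mul_comm]
          simp only [Matrix.mul_assoc]
      _ = c := by rw [mul_pow_mul_pow_mul_eq hc hL _ _ _ (by omega), Nat.sub_add_cancel hk.le]
  have hAB : (A ^ q * B ^ j * (A * B)).trace = (A ^ (q + 1) * B ^ (j + 1)).trace + j * c := by
    rw [show A ^ q * B ^ j * (A * B) = A ^ q * (B ^ j * A) * B by simp only [Matrix.mul_assoc],
      pow_mul_eq_mul_pow_add_sum hc, Matrix.mul_add, Matrix.add_mul, trace_add, Matrix.mul_sum,
      Matrix.sum_mul, trace_sum, sum_congr rfl hterm, sum_const, card_range, nsmul_eq_mul,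
      pow_succ, pow_succ]
    simp only [Matrix.mul_assoc]
  have hc' : ((j + 1 : ℕ) : K) * c = 0 := by
    rw [hBA, hAB] at hdiff
    push_cast
    linear_combination hdiff
  have hc0 : (y * (A ^ q * B ^ j) * x) 0 0 = 0 := by
    rw [← trace_fin_one (y * (A ^ q * B ^ j) * x)]
    exact (mul_eq_zero.mp hc').resolve_left (Nat.cast_ne_zero.mpr j.succ_ne_zero)
  ext a b
  rwa [Subsingleton.elim a 0, Subsingleton.elim b 0]

theorem mul_pow_mul_pow_mul_eq_zero [NoZeroDivisors K] [CharZero K]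
    (hc : B * A = A * B + x * y) (i j : ℕ) : y * (A ^ i * B ^ j) * x = 0 := by
  have hvanish : ∀ L p q r, p + q + r < L → y * (B ^ p * A ^ q * B ^ r) * x = 0 := by
    intro L
    induction L with
    | zero => intro p q r h; omega
    | succ L ih =>
      intro p q r h
      rcases Nat.lt_succ_iff_lt_or_eq.mp h with h | h
      · exact ih p q r h
      · rw [mul_pow_mul_pow_mul_eq hc ih p q r (by omega)]
        exact mul_pow_mul_pow_mul_eq_zero_of_forall_lt hc ih q (p + r) (by omega)
  simpa using hvanish (i + j + 1) 0 i j (by omega)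

theorem mul_pow_mul_pow_mul_eq_pow_mul_pow_succ_mul [NoZeroDivisors K] [CharZero K]
    (hc : B * A = A * B + x * y) (i j : ℕ) :
    B * (A ^ i * B ^ j) * x = A ^ i * B ^ (j + 1) * x := by
  have hterm : ∀ k ∈ range i, A ^ k * (x * y) * A ^ (i - 1 - k) * B ^ j * x = 0 := fun k _ => by
    calc A ^ k * (x * y) * A ^ (i - 1 - k) * B ^ j * x
        = A ^ k * x * (y * (A ^ (i - 1 - k) * B ^ j) * x) := by simp only [Matrix.mul_assoc]
      _ = 0 := by rw [mul_pow_mul_pow_mul_eq_zero hc, Matrix.mul_zero]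
  rw [← Matrix.mul_assoc, mul_pow_eq_pow_mul_add_sum hc, Matrix.add_mul, Matrix.add_mul,
    Matrix.sum_mul, Matrix.sum_mul, sum_eq_zero hterm, add_zero, pow_succ', Matrix.mul_assoc (A ^ i)]

end RankOneCommutator

section StarProjection

variable {𝕜 n ι : Type*} [RCLike 𝕜] [Fintype n] [DecidableEq n]

theorem exists_isStarProjection_mul_eq_self (G : ι → Matrix n n 𝕜) :
    ∃ P : Matrix n n 𝕜, IsStarProjection P ∧ (∀ i, P * G i = G i) ∧
      ∀ N : Matrix n n 𝕜, (∀ i, N * G i = 0) → N * P = 0 := by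
  let Φ : Matrix n n 𝕜 ≃⋆ₐ[𝕜] (EuclideanSpace 𝕜 n →L[𝕜] EuclideanSpace 𝕜 n) := toEuclideanCLM
  let V := ⨆ i, LinearMap.range (Φ (G i) : EuclideanSpace 𝕜 n →ₗ[𝕜] EuclideanSpace 𝕜 n)
  refine ⟨Φ.symm V.starProjection, isStarProjection_starProjection.map Φ.symm,
    fun i => EquivLike.injective Φ ?_, fun N hN => EquivLike.injective Φ ?_⟩
  · rw [map_mul, Φ.apply_symm_apply]
    ext1 v
    exact V.starProjection_eq_self_iff.mpr
      (Submodule.mem_iSup_of_mem i (LinearMap.mem_range_self _ v))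
  · have hker : V ≤ LinearMap.ker (Φ N : EuclideanSpace 𝕜 n →ₗ[𝕜] EuclideanSpace 𝕜 n) :=
      iSup_le fun i => by
        rintro _ ⟨v, rfl⟩
        change (Φ N * Φ (G i)) v = 0
        rw [← map_mul, hN i, map_zero]
        rfl
    rw [map_mul, Φ.apply_symm_apply, map_zero]
    ext1 v
    exact hker (V.starProjection_apply_mem v)

end StarProjection

section Trace

variable {R n : Type*} [CommRing R] [StarRing R] [Fintype n]

theorem trace_one_sub_mul_commutator_conjTranspose [DecidableEq n] {P : Matrix n n R} (hP : IsStarProjection P)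
    {A : Matrix n n R} (hA : (1 - P) * A * P = 0) :
    ((1 - P) * (A * Aᴴ - Aᴴ * A)).trace = -(P * A * (1 - P) * (P * A * (1 - P))ᴴ).trace := by
  set Q := 1 - P with hQ
  have hPP : P * P = P := hP.isIdempotentElem
  have hQQ : Q * Q = Q := hP.one_sub.isIdempotentElem
  have hPH : Pᴴ = P := hP.isSelfAdjoint
  have hQH : Qᴴ = Q := hP.one_sub.isSelfAdjoint
  have hQAQ : Q * A * Q = Q * A := by
    calc Q * A * Q = Q * A * (1 - P) := rfl
      _ = Q * A := by rw [Matrix.mul_sub, Matrix.mul_one, hA, sub_zero]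
  have hsplit : A * Q * Aᴴ = P * A * Q * Aᴴ + Q * A * Q * Aᴴ := by
    rw [hQ]; noncomm_ring
  have hnorm : (P * A * Q * (P * A * Q)ᴴ).trace = (P * A * Q * Aᴴ).trace := by
    calc (P * A * Q * (P * A * Q)ᴴ).trace = (P * A * (Q * Q) * Aᴴ * P).trace := by
          rw [conjTranspose_mul, conjTranspose_mul, hPH, hQH]
          simp only [Matrix.mul_assoc]
      _ = (P * (P * A * Q * Aᴴ)).trace := by rw [hQQ, trace_mul_comm]
      _ = (P * A * Q * Aᴴ).trace := by simp only [← Matrix.mul_assoc, hPP]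
  rw [Matrix.mul_sub, trace_sub, ← Matrix.mul_assoc Q Aᴴ, trace_mul_cycle Q Aᴴ A, hsplit,
    trace_add, hQAQ, hnorm, ← Matrix.mul_assoc]
  abel

theorem trace_commutator_mul_commutator_of_commute {A B : Matrix n n R} (hAB : A * B = B * A) :
    ((A * Aᴴ - Aᴴ * A) * (B * Bᴴ - Bᴴ * B)).trace
      = ((A * Bᴴ - Bᴴ * A) * (A * Bᴴ - Bᴴ * A)ᴴ).trace := by
  have h1 : (A * Bᴴ * (B * Aᴴ)).trace = (Aᴴ * A * (Bᴴ * B)).trace := by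
    rw [← Matrix.mul_assoc, trace_mul_comm]
    simp only [Matrix.mul_assoc]
  have h2 : (A * Bᴴ * (Aᴴ * B)).trace = (Aᴴ * A * (B * Bᴴ)).trace := by
    rw [← Matrix.mul_assoc, trace_mul_comm, ← Matrix.mul_assoc, ← Matrix.mul_assoc, ← hAB,
      trace_mul_comm]
    simp only [Matrix.mul_assoc]
  have h3 : (Bᴴ * A * (B * Aᴴ)).trace = (A * Aᴴ * (Bᴴ * B)).trace := by
    rw [← Matrix.mul_assoc, Matrix.mul_assoc Bᴴ, hAB, trace_mul_comm (A * Aᴴ)]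
    simp only [Matrix.mul_assoc]
  have h4 : (Bᴴ * A * (Aᴴ * B)).trace = (A * Aᴴ * (B * Bᴴ)).trace := by
    rw [trace_mul_comm (A * Aᴴ), ← Matrix.mul_assoc (Bᴴ * A), trace_mul_comm (Bᴴ * A * Aᴴ)]
    simp only [Matrix.mul_assoc]
  rw [conjTranspose_sub, conjTranspose_mul, conjTranspose_mul, conjTranspose_conjTranspose]
  simp only [Matrix.sub_mul, Matrix.mul_sub, trace_sub, h1, h2, h3, h4]
  abel

end Trace

theorem trace_mul_conjTranspose_self_nonneg {R m n : Type*} [Ring R] [PartialOrder R] [StarRing R]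
    [StarOrderedRing R] [AddLeftMono R] [Fintype m] [Fintype n] (M : Matrix m n R) :
    0 ≤ (M * Mᴴ).trace :=
  (posSemidef_self_mul_conjTranspose M).trace_nonneg

section MomentMap

open scoped ComplexOrder

variable {𝕜 n : Type*} [RCLike 𝕜] [Fintype n] {A B : Matrix n n 𝕜}

theorem eq_zero_of_commutators_add_mul_conjTranspose_self_eq_zero {m : Type*} [Fintype m]
    {X : Matrix n m 𝕜} (h : A * Aᴴ - Aᴴ * A + (B * Bᴴ - Bᴴ * B) + X * Xᴴ = 0) : X = 0 := by
  have htrace := congrArg trace h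
  rw [trace_add, trace_add, trace_sub, trace_sub, trace_mul_comm A, trace_mul_comm B, sub_self,
    sub_self, zero_add, zero_add, trace_zero] at htrace
  exact trace_mul_conjTranspose_self_eq_zero_iff.mp htrace

theorem exists_isStarProjection_invariant [DecidableEq n] {x : Matrix n (Fin 1) 𝕜}
    {y : Matrix (Fin 1) n 𝕜} (hc : B * A = A * B + x * y) :
    ∃ P : Matrix n n 𝕜, IsStarProjection P ∧ (1 - P) * A * P = 0 ∧ (1 - P) * B * P = 0 ∧
      (1 - P) * (x * xᴴ) = 0 ∧ yᴴ * y * P = 0 := by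
  -- `x xᴴ` has the same range as `x`, so `P` projects onto the span of the `Aⁱ Bʲ x`.
  obtain ⟨P, hP, hPG, hPN⟩ :=
    exists_isStarProjection_mul_eq_self fun ij : ℕ × ℕ => A ^ ij.1 * B ^ ij.2 * (x * xᴴ)
  have hinv : ∀ M : Matrix n n 𝕜, (∀ i j : ℕ, ∃ k l : ℕ,
      M * (A ^ i * B ^ j * (x * xᴴ)) = A ^ k * B ^ l * (x * xᴴ)) → (1 - P) * M * P = 0 := by
    intro M hM
    refine hPN _ fun ⟨i, j⟩ => ?_
    obtain ⟨k, l, h⟩ := hM i j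
    rw [Matrix.mul_assoc, h, Matrix.sub_mul, Matrix.one_mul, hPG (k, l), sub_self]
  refine ⟨P, hP, hinv A fun i j => ⟨i + 1, j, by simp only [pow_succ', Matrix.mul_assoc]⟩,
    hinv B fun i j => ⟨i, j + 1, ?_⟩, ?_, hPN _ fun ⟨i, j⟩ => ?_⟩
  · simpa only [Matrix.mul_assoc] using
      congrArg (· * xᴴ) (mul_pow_mul_pow_mul_eq_pow_mul_pow_succ_mul hc i j)
  · have hx := hPG (0, 0)
    simp only [pow_zero, Matrix.one_mul] at hx
    rw [Matrix.sub_mul, Matrix.one_mul, hx, sub_self]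
  · calc yᴴ * y * (A ^ i * B ^ j * (x * xᴴ)) = yᴴ * (y * (A ^ i * B ^ j) * x) * xᴴ := by
          simp only [Matrix.mul_assoc]
      _ = 0 := by rw [mul_pow_mul_pow_mul_eq_zero hc, Matrix.mul_zero, Matrix.zero_mul]

theorem row_eq_zero_of_moment_map [DecidableEq n] {x : Matrix n (Fin 1) 𝕜}
    {y : Matrix (Fin 1) n 𝕜}
    (hreal : A * Aᴴ - Aᴴ * A + (B * Bᴴ - Bᴴ * B) + x * xᴴ - yᴴ * y = 0)
    (hc : B * A = A * B + x * y) : y = 0 := by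
  obtain ⟨P, hP, hAP, hBP, hxx, hyy⟩ := exists_isStarProjection_invariant hc
  have hyterm : ((1 - P) * (yᴴ * y)).trace = (yᴴ * yᴴᴴ).trace := by
    rw [trace_mul_comm, Matrix.mul_sub, Matrix.mul_one, hyy, sub_zero, conjTranspose_conjTranspose]
  have htrace : ((1 - P) * (A * Aᴴ - Aᴴ * A)).trace + ((1 - P) * (B * Bᴴ - Bᴴ * B)).trace
      + ((1 - P) * (x * xᴴ)).trace - ((1 - P) * (yᴴ * y)).trace = 0 := by
    rw [← trace_add, ← trace_add, ← trace_sub, ← Matrix.mul_add, ← Matrix.mul_add,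
      ← Matrix.mul_sub, hreal, Matrix.mul_zero, trace_zero]
  rw [trace_one_sub_mul_commutator_conjTranspose hP hAP,
    trace_one_sub_mul_commutator_conjTranspose hP hBP, hxx, trace_zero, hyterm] at htrace
  have hsum : (P * A * (1 - P) * (P * A * (1 - P))ᴴ).trace
      + (P * B * (1 - P) * (P * B * (1 - P))ᴴ).trace + (yᴴ * yᴴᴴ).trace = 0 := by
    linear_combination -htrace
  have hy := ((add_eq_zero_iff_of_nonneg (add_nonneg (trace_mul_conjTranspose_self_nonneg _)
    (trace_mul_conjTranspose_self_nonneg _)) (trace_mul_conjTranspose_self_nonneg _)).mp hsum).2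
  simpa using trace_mul_conjTranspose_self_eq_zero_iff.mp hy

theorem mul_conjTranspose_eq_conjTranspose_mul_of_commute (hAB : A * B = B * A)
    (h : A * Aᴴ - Aᴴ * A + (B * Bᴴ - Bᴴ * B) = 0) : A * Aᴴ = Aᴴ * A := by
  set C := A * Aᴴ - Aᴴ * A
  set D := A * Bᴴ - Bᴴ * A
  have hCH : Cᴴ = C := by
    simp only [C, conjTranspose_sub, conjTranspose_mul, conjTranspose_conjTranspose]
  have hsum : (C * Cᴴ).trace + (D * Dᴴ).trace = 0 := by
    rw [← trace_commutator_mul_commutator_of_commute hAB, eq_neg_of_add_eq_zero_right h, hCH,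
      Matrix.mul_neg, trace_neg, add_neg_cancel]
  have hC := ((add_eq_zero_iff_of_nonneg (trace_mul_conjTranspose_self_nonneg C)
    (trace_mul_conjTranspose_self_nonneg D)).mp hsum).1
  exact sub_eq_zero.mp (trace_mul_conjTranspose_self_eq_zero_iff.mp hC)

end MomentMap

end Matrix

/-- At level `t = 0`, solutions of the moment map equations consist of
commuting normal matrices with `x = 0` and `y = 0`. -/
theorem stmt_1 (n : ℕ)
    (A B : Matrix (Fin n) (Fin n) ℂ)
    (x : Matrix (Fin n) (Fin 1) ℂ) (y : Matrix (Fin 1) (Fin n) ℂ)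
    (hreal : A * Aᴴ - Aᴴ * A + (B * Bᴴ - Bᴴ * B) + x * xᴴ - yᴴ * y = 0)
    (hcplx : A * B - B * A + x * y = 0) :
    x = 0 ∧ y = 0 ∧ A * B = B * A ∧ A * Aᴴ = Aᴴ * A ∧ B * Bᴴ = Bᴴ * B := by
  have hc : B * A = A * B + x * y := by
    rw [← sub_eq_zero, ← neg_eq_zero, ← hcplx]
    abel
  obtain rfl : y = 0 := row_eq_zero_of_moment_map hreal hc
  rw [Matrix.mul_zero, sub_zero] at hreal
  obtain rfl : x = 0 := eq_zero_of_commutators_add_mul_conjTranspose_self_eq_zero hreal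
  rw [Matrix.zero_mul, add_zero] at hreal hcplx
  have hAB : A * B = B * A := sub_eq_zero.mp hcplx
  exact ⟨rfl, rfl, hAB, mul_conjTranspose_eq_conjTranspose_mul_of_commute hAB hreal,
    mul_conjTranspose_eq_conjTranspose_mul_of_commute hAB.symm (by rwa [add_comm] at hreal)⟩
end

section
/- Let a compact Lie group G act ℝ-linearly on ℍ^m preserving the quaternionic structure, with hyperkähler moment map μ: ℍ^m → 𝔤* ⊗ Im ℍ. For q ∈ ℍ^m let l_q: 𝔤 → ℍ^m be l_q(h) = h·q and P_q the orthogonal projection onto the orthogonal complement of Im l_q^ℂ ⊕ J Im l_q^ℂ (where l_q^ℂ extends l_q to 𝔤^ℂ). Let X be a complex manifold and Ψ: X → μ⁻¹{ζ} a smooth map which locally factors as Ψ(x) = g(x)·Ψ̃(x) with g: X → G^ℂ smooth and Ψ̃: X → μ_ℂ⁻¹{ζ_ℂ} holomorphic. Then for every x ∈ X, v ∈ T_xX, and q = Ψ(x): P_q(dΨ(x)(Iv)) = I·P_q(dΨ(x)(v)); i.e., the induced map to the hyperkähler quotient is holomorphic with respect to the complex structure I. -/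
open Filter Topology

/-- Holomorphy of maps into a hyperkähler quotient (Lemma `holo`).

`V` is the quaternionic vector space `ℍ^m`, with `I` given by the complex scalar action
and `J` a conjugate-linear complex structure.  The complexified Lie algebra of the compact
group `G` is modelled by a complex subspace `𝔞` of endomorphisms of `V` acting by
`l_q^ℂ(h) = h(q)`; the subspace `K q = Im l_q^ℂ ⊔ J(Im l_q^ℂ)` is the tangent space of the
`G^ℂ`-orbit, and `P_q` is the orthogonal projection onto `(K q)ᗮ`.

If `Ψ : X → μ⁻¹{ζ}` is a smooth map from a complex manifold which locally factors as
`Ψ(x) = g(x)·Ψ̃(x)` with `g : X → G^ℂ` smooth (i.e. `ġ g⁻¹ ∈ 𝔞`) and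
`Ψ̃ : X → μ_ℂ⁻¹{ζ_ℂ}` holomorphic, then
`P_q(dΨ(x)(Iv)) = I · P_q(dΨ(x)(v))` for all `x, v`, where `q = Ψ(x)`:
the induced map to the hyperkähler quotient is `I`-holomorphic. -/
theorem stmt_6
    (V : Type*) [NormedAddCommGroup V] [InnerProductSpace ℂ V] [FiniteDimensional ℂ V]
    (X : Type*) [NormedAddCommGroup X] [NormedSpace ℂ X]
    (W W' : Type*)
    -- the quaternionic structure J (conjugate linear, J² = −1, isometric):
    (J : V →ₗ[ℝ] V)
    (hJc : ∀ (a : ℂ) (v : V), J (a • v) = (starRingEnd ℂ a) • J v)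
    (hJJ : ∀ v : V, J (J v) = -v)
    (hJiso : ∀ v : V, ‖J v‖ = ‖v‖)
    -- the complexified Lie algebra 𝔞 ⊆ End(V) of G:
    (𝔞 : Submodule ℂ (V →L[ℂ] V))
    -- the hyperkähler moment map and its complex part, with level ζ = (ζ_ℝ, ζ_ℂ):
    (μ : V → W) (ζ : W) (μC : V → W') (ζC : W')
    -- the map Ψ into the level set μ⁻¹{ζ}:
    (Ψ : X → V) (hΨsmooth : ContDiff ℝ (⊤ : ℕ∞) Ψ) (hΨζ : ∀ x, μ (Ψ x) = ζ)
    -- local factorization Ψ = g·Ψ̃ with g : X → G^ℂ smooth and Ψ̃ holomorphic into μ_ℂ⁻¹{ζ_ℂ}: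
    (hloc : ∀ x₀ : X, ∃ (U : Set X) (g gi : X → (V →L[ℂ] V)) (Ψt : X → V),
      U ∈ 𝓝 x₀ ∧
      ContDiffOn ℝ (⊤ : ℕ∞) g U ∧
      (∀ x ∈ U, (g x).comp (gi x) = ContinuousLinearMap.id ℂ V ∧
        (gi x).comp (g x) = ContinuousLinearMap.id ℂ V) ∧
      (∀ x ∈ U, ∀ v : X, (fderiv ℝ g x v).comp (gi x) ∈ 𝔞) ∧
      DifferentiableOn ℂ Ψt U ∧
      (∀ x ∈ U, μC (Ψt x) = ζC) ∧
      (∀ x ∈ U, Ψ x = g x (Ψt x))) :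
    -- conclusion: P_q ∘ dΨ(x) is complex linear, with
    -- K q = span of the G^ℂ-orbit directions and their J-images:
    ∀ (x : X) (v : X),
      (Submodule.orthogonalProjectionOnto
          (Submodule.span ℂ {w : V | ∃ h ∈ 𝔞, w = h (Ψ x) ∨ w = J (h (Ψ x))})ᗮ)
        (fderiv ℝ Ψ x (Complex.I • v))
      = Complex.I •
        (Submodule.orthogonalProjectionOnto
          (Submodule.span ℂ {w : V | ∃ h ∈ 𝔞, w = h (Ψ x) ∨ w = J (h (Ψ x))})ᗮ)
        (fderiv ℝ Ψ x v) := by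
  intro x v
  obtain ⟨U, g, gi, Ψt, hU, hg, hginv, h𝔞, hΨt, hζC, hfac⟩ := hloc x
  have hxU : x ∈ U := mem_of_mem_nhds hU
  set K : Submodule ℂ V :=
    Submodule.span ℂ {w : V | ∃ h ∈ 𝔞, w = h (Ψ x) ∨ w = J (h (Ψ x))} with hKdef
  have hgd : DifferentiableAt ℝ g x := (hg.contDiffAt hU).differentiableAt (by simp)
  have hΨtC : DifferentiableAt ℂ Ψt x := hΨt.differentiableAt hU
  have hΨtR : DifferentiableAt ℝ Ψt x := hΨtC.restrictScalars ℝ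
  have heq : Ψ =ᶠ[𝓝 x] fun y => g y (Ψt y) := by
    filter_upwards [hU] with y hy using hfac y hy
  set L : (V →L[ℂ] V) →L[ℝ] (V →L[ℝ] V) :=
    ContinuousLinearMap.restrictScalarsL ℂ V V ℝ ℝ with hLdef
  have hLg : DifferentiableAt ℝ (L ∘ g) x := L.differentiableAt.comp x hgd
  have hLf : fderiv ℝ (L ∘ g) x = L.comp (fderiv ℝ g x) := by
    rw [fderiv_comp x L.differentiableAt hgd, L.fderiv]
  have hfd : ∀ v' : X, fderiv ℝ Ψ x v' = fderiv ℝ g x v' (Ψt x) + g x (fderiv ℝ Ψt x v') := by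
    intro v'
    have e2 : Ψ =ᶠ[𝓝 x] fun y => (L ∘ g) y (Ψt y) := heq
    rw [e2.fderiv_eq, fderiv_clm_apply hLg hΨtR, hLf]
    simp [hLdef]
    abel
  have hgig : gi x (g x (Ψt x)) = Ψt x := by
    have := congrArg (fun f : V →L[ℂ] V => f (Ψt x)) (hginv x hxU).2
    simpa using this
  have hker : ∀ v' : X, (Submodule.orthogonalProjectionOnto Kᗮ) (fderiv ℝ g x v' (Ψt x)) = 0 := by
    intro v'
    apply Submodule.orthogonalProjectionOnto_apply_of_mem_orthogonal
    apply Submodule.le_orthogonal_orthogonal K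
    apply Submodule.subset_span
    refine ⟨(fderiv ℝ g x v').comp (gi x), h𝔞 x hxU v', Or.inl ?_⟩
    rw [hfac x hxU, ContinuousLinearMap.comp_apply, hgig]
  have hI : fderiv ℝ Ψt x (Complex.I • v) = Complex.I • fderiv ℝ Ψt x v := by
    rw [hΨtC.fderiv_restrictScalars ℝ]
    simp
  rw [hfd (Complex.I • v), hfd v]
  simp only [map_add, hker, zero_add, hI, map_smul]
end

section
/- Let d ≥ 4 and let h: ℝ^{2d} \ {0} → ℝ be homogeneous of degree −3, i.e. h(rθ) = r⁻³ h̄(θ) for r > 0 and θ on the unit sphere, where h̄ ≥ 0 is measurable. Suppose there is a closed subset Σ of the unit sphere of codimension ≥ 4 and a constant C with h̄(θ) ≤ C·dist(θ,Σ)⁻² for all θ ∉ Σ. Then h̄ is integrable on the unit sphere, and lim_{R→∞} R^{3−d'} ∫_{B(0,R)} h = (1/(d'−3)) ∫_{S} h̄, where d' = 2d is the real dimension (assuming d' > 3). -/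
/-!
In polar coordinates `x = r • θ` Lebesgue measure becomes `μ_S ⊗ r^{d'-1} dr`, so by
homogeneity `∫_{B(0,R)} h = (∫_S h̄) · ∫_0^R r^{d'-4} dr = R^{d'-3}/(d'-3) · ∫_S h̄` for every
`R > 0`: the rescaled integral is eventually constant.

Integrability of `h̄` is a layer-cake estimate: with `g = dist(·, Σ)`, the tube bound
`μ_S {g < ε} ≤ c ε⁴` gives `μ_S {c / g² > t} ≤ c³ t⁻²` for `t ≥ c`, which is integrable at
infinity.
-/

open Metric MeasureTheory Filter
open scoped ENNReal

theorem lt_sqrt_div_of_lt_div_sq {a t y : ℝ} (ht : 0 < t) (h : t < a / y ^ 2) :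
    y < √(a / t) := by
  have hy : 0 < y ^ 2 := (sq_nonneg y).lt_of_ne fun hy => by
    rw [← hy, div_zero] at h
    exact ht.not_gt h
  rw [lt_div_iff₀ hy] at h
  refine (le_abs_self y).trans_lt (Real.lt_sqrt_of_sq_lt ?_)
  rw [sq_abs, lt_div_iff₀ ht]
  linarith

section SublevelBound

open Set Topology

variable {X : Type*} [MeasurableSpace X]

def QuarticSublevelBound (μ : Measure X) (g : X → ℝ) (C : ℝ) : Prop :=
  ∀ ε : ℝ, 0 < ε → ε ≤ 1 → μ {x | g x < ε} ≤ ENNReal.ofReal (C * ε ^ 4)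

namespace QuarticSublevelBound

variable {μ : Measure X} {g : X → ℝ} {C : ℝ}

theorem measure_setOf_nonpos_eq_zero (hμ : QuarticSublevelBound μ g C) :
    μ {x | g x ≤ 0} = 0 := by
  have hcont : Continuous fun ε : ℝ => ENNReal.ofReal (C * ε ^ 4) :=
    ENNReal.continuous_ofReal.comp (by fun_prop)
  have hlim : Tendsto (fun ε : ℝ => ENNReal.ofReal (C * ε ^ 4)) (𝓝[>] 0) (𝓝 0) := by
    simpa using (hcont.tendsto 0).mono_left nhdsWithin_le_nhds
  refine le_antisymm (ge_of_tendsto hlim ?_) zero_le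
  filter_upwards [Ioc_mem_nhdsGT zero_lt_one] with ε hε
  exact (measure_mono fun x (hx : g x ≤ 0) => hx.trans_lt hε.1).trans (hμ ε hε.1 hε.2)

theorem measure_lt_div_sq_le (hμ : QuarticSublevelBound μ g C) {a t : ℝ} (ha : 0 < a)
    (hat : a ≤ t) :
    μ {x | t < a / g x ^ 2} ≤ ENNReal.ofReal (C * a ^ 2 * t ^ (-2 : ℝ)) := by
  have ht : 0 < t := ha.trans_le hat
  calc μ {x | t < a / g x ^ 2} ≤ μ {x | g x < √(a / t)} :=
        measure_mono fun x hx => lt_sqrt_div_of_lt_div_sq ht hx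
    _ ≤ ENNReal.ofReal (C * √(a / t) ^ 4) :=
        hμ _ (Real.sqrt_pos.2 (div_pos ha ht)) (Real.sqrt_le_one.2 ((div_le_one ht).2 hat))
    _ = ENNReal.ofReal (C * a ^ 2 * t ^ (-2 : ℝ)) := by
        rw [show (4 : ℕ) = 2 * 2 from rfl, pow_mul, Real.sq_sqrt (div_pos ha ht).le,
          Real.rpow_neg ht.le, Real.rpow_two, div_pow, div_eq_mul_inv, mul_assoc]

theorem lintegral_ofReal_div_sq_lt_top [IsFiniteMeasure μ] (hμ : QuarticSublevelBound μ g C)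
    (hg : Measurable g) {a : ℝ} (ha : 0 < a) :
    ∫⁻ x, ENNReal.ofReal (a / g x ^ 2) ∂μ < ⊤ := by
  rw [lintegral_eq_lintegral_meas_lt μ (.of_forall fun x => by positivity) (by fun_prop),
    ← Ioc_union_Ioi_eq_Ioi ha.le, lintegral_union measurableSet_Ioi (Ioc_disjoint_Ioi le_rfl)]
  refine ENNReal.add_lt_top.2 ⟨?_, ?_⟩
  · calc ∫⁻ t in Ioc 0 a, μ {x | t < a / g x ^ 2} ≤ ∫⁻ _ in Ioc 0 a, μ univ :=
          setLIntegral_mono measurable_const fun t _ => measure_mono (subset_univ _)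
      _ < ⊤ := by simpa using ENNReal.mul_lt_top (measure_lt_top μ univ) ENNReal.ofReal_lt_top
  · calc ∫⁻ t in Ioi a, μ {x | t < a / g x ^ 2}
          ≤ ∫⁻ t in Ioi a, ENNReal.ofReal (C * a ^ 2 * t ^ (-2 : ℝ)) :=
          setLIntegral_mono (by fun_prop) fun t ht => hμ.measure_lt_div_sq_le ha (le_of_lt ht)
      _ < ⊤ := IntegrableOn.setLIntegral_lt_top
          ((integrableOn_Ioi_rpow_of_lt (by norm_num) ha).const_mul (C * a ^ 2))

theorem integrable_of_le_div_sq [IsFiniteMeasure μ] (hμ : QuarticSublevelBound μ g C)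
    (hg : Measurable g) {a : ℝ} (ha : 0 < a) {f : X → ℝ} (hf : AEStronglyMeasurable f μ)
    (hf0 : ∀ x, 0 ≤ f x) (hfg : ∀ x, 0 < g x → f x ≤ a / g x ^ 2) :
    Integrable f μ := by
  refine ⟨hf, (hasFiniteIntegral_iff_ofReal (.of_forall hf0)).2 ?_⟩
  refine (lintegral_mono_ae ?_).trans_lt (hμ.lintegral_ofReal_div_sq_lt_top hg ha)
  filter_upwards [measure_eq_zero_iff_ae_notMem.1 hμ.measure_setOf_nonpos_eq_zero] with x hx
  exact ENNReal.ofReal_le_ofReal (hfg x (not_le.1 hx))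

end QuarticSublevelBound

end SublevelBound

section Polar

open Set

variable {E F : Type*} [NormedAddCommGroup E] [NormedSpace ℝ E] [MeasurableSpace E] [BorelSpace E]
  [FiniteDimensional ℝ E] [NormedAddCommGroup F] [NormedSpace ℝ F]
  (μ : Measure E) [μ.IsAddHaarMeasure]

local notation "dim" => Module.finrank ℝ

theorem integral_eq_integral_toSphere_prod_volumeIoiPow [Nontrivial E] (f : E → F) :
    ∫ x, f x ∂μ = ∫ p : sphere (0 : E) 1 × Ioi (0 : ℝ), f ((p.2 : ℝ) • (p.1 : E))
      ∂μ.toSphere.prod (Measure.volumeIoiPow (dim E - 1)) := by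
  conv_lhs => rw [← restrict_compl_singleton (μ := μ) 0]
  rw [← integral_subtype_comap (measurableSet_singleton (0 : E)).compl f,
    ← (μ.measurePreserving_homeomorphUnitSphereProd).integral_comp
      (Homeomorph.measurableEmbedding _)]
  refine integral_congr_ae (.of_forall fun x => ?_)
  simp [smul_inv_smul₀ (norm_ne_zero_iff.2 x.2)]

theorem integral_volumeIoiPow (n : ℕ) (g : ℝ → F) :
    ∫ r, g r ∂Measure.volumeIoiPow n = ∫ y in Ioi (0 : ℝ), y ^ n • g y := by
  rw [Measure.volumeIoiPow, integral_withDensity_eq_integral_toReal_smul (by fun_prop)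
      (.of_forall fun _ => ENNReal.ofReal_lt_top),
    integral_subtype_comap measurableSet_Ioi fun y => (ENNReal.ofReal (y ^ n)).toReal • g y]
  refine setIntegral_congr_fun measurableSet_Ioi fun y hy => ?_
  rw [ENNReal.toReal_ofReal (pow_nonneg hy.out.le n)]

theorem setIntegral_ball_of_homogeneous {k : ℕ} (hk : k < dim E) {h : E → ℝ}
    {hbar : sphere (0 : E) 1 → ℝ}
    (hhom : ∀ r : ℝ, 0 < r → ∀ θ : sphere (0 : E) 1, h (r • (θ : E)) = (r ^ k)⁻¹ * hbar θ)
    {R : ℝ} (hR : 0 ≤ R) :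
    ∫ x in ball (0 : E) R, h x ∂μ =
      (∫ θ, hbar θ ∂μ.toSphere) * (R ^ (dim E - k) / (dim E - k : ℕ)) := by
  have hpolar : ∀ p : sphere (0 : E) 1 × Ioi (0 : ℝ),
      (ball 0 R).indicator h ((p.2 : ℝ) • (p.1 : E)) =
        hbar p.1 * (Iio R).indicator (fun r => (r ^ k)⁻¹) (p.2 : ℝ) := by
    rintro ⟨θ, r, hr : 0 < r⟩
    by_cases hrR : r < R
    · simp [indicator, norm_smul, abs_of_pos hr, hrR, hhom r hr, mul_comm]
    · simp [indicator, norm_smul, abs_of_pos hr, hrR]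
  have : Nontrivial E := Module.nontrivial_of_finrank_pos (k.zero_le.trans_lt hk)
  rw [← integral_indicator measurableSet_ball, integral_eq_integral_toSphere_prod_volumeIoiPow,
    integral_congr_ae (.of_forall hpolar),
    integral_prod_mul hbar fun r : Ioi (0 : ℝ) => (Iio R).indicator (fun r => (r ^ k)⁻¹) r.1,
    integral_volumeIoiPow]
  congr 1
  calc ∫ y in Ioi (0 : ℝ), y ^ (dim E - 1) • (Iio R).indicator (fun r => (r ^ k)⁻¹) y
      = ∫ y in Ioi (0 : ℝ), (Iio R).indicator (fun y => y ^ (dim E - k - 1)) y := by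
        refine setIntegral_congr_fun measurableSet_Ioi fun y (hy : 0 < y) => ?_
        by_cases hyR : y < R
        · have hyR : y ∈ Iio R := hyR
          rw [indicator_of_mem hyR, indicator_of_mem hyR, smul_eq_mul,
            ← pow_sub₀ _ hy.ne' (by omega : k ≤ dim E - 1), Nat.sub_right_comm]
        · simp [hyR]
    _ = ∫ y in (0 : ℝ)..R, y ^ (dim E - k - 1) := by
        rw [setIntegral_indicator measurableSet_Iio, Ioi_inter_Iio,
          intervalIntegral.integral_of_le hR, integral_Ioc_eq_integral_Ioo]
    _ = R ^ (dim E - k) / (dim E - k : ℕ) := by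
        rw [integral_pow, zero_pow (by omega), sub_zero, ← Nat.cast_add_one,
          Nat.sub_add_cancel (by omega)]

end Polar

theorem stmt_10_general (d : ℕ) (hd : 4 ≤ d)
    (h : EuclideanSpace ℝ (Fin (2 * d)) → ℝ)
    (hbar : Metric.sphere (0 : EuclideanSpace ℝ (Fin (2 * d))) 1 → ℝ)
    (hbar_nonneg : ∀ θ, 0 ≤ hbar θ) (hbar_meas : Measurable hbar)
    -- h is homogeneous of degree −3 with spherical part h̄:
    (hhom : ∀ (r : ℝ), 0 < r →
      ∀ θ : Metric.sphere (0 : EuclideanSpace ℝ (Fin (2 * d))) 1,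
        h (r • (θ : EuclideanSpace ℝ (Fin (2 * d)))) = (r ^ 3)⁻¹ * hbar θ)
    (Sig : Set (Metric.sphere (0 : EuclideanSpace ℝ (Fin (2 * d))) 1))
    -- Sigma has codimension ≥ 4 in the sphere: tube volume bound
    (c : ℝ) (hc : 0 < c)
    (htube : ∀ ε : ℝ, 0 < ε → ε ≤ 1 →
      volume.toSphere {θ : Metric.sphere (0 : EuclideanSpace ℝ (Fin (2 * d))) 1 |
          Metric.infDist (θ : EuclideanSpace ℝ (Fin (2 * d)))
            ((↑) '' Sig : Set (EuclideanSpace ℝ (Fin (2 * d)))) < ε}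
        ≤ ENNReal.ofReal (c * ε ^ 4))
    -- h̄ is bounded by dist(·,Sigma)⁻² off Sigma:
    (hbound : ∀ θ, θ ∉ Sig → hbar θ ≤ c / (Metric.infDist (θ : EuclideanSpace ℝ (Fin (2 * d)))
        ((↑) '' Sig : Set (EuclideanSpace ℝ (Fin (2 * d)))) ^ 2)) :
    Integrable hbar volume.toSphere ∧
    Tendsto (fun R : ℝ => R ^ (3 - (2 * d : ℝ)) * ∫ x in ball (0 : EuclideanSpace ℝ (Fin (2 * d))) R, h x)
      atTop (nhds ((1 / ((2 * d : ℝ) - 3)) * ∫ θ, hbar θ ∂volume.toSphere)) := by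
  have hdist_meas : Measurable fun θ : sphere (0 : EuclideanSpace ℝ (Fin (2 * d))) 1 =>
      infDist (θ : EuclideanSpace ℝ (Fin (2 * d))) ((↑) '' Sig) :=
    ((continuous_infDist_pt _).comp continuous_subtype_val).measurable
  refine ⟨QuarticSublevelBound.integrable_of_le_div_sq htube hdist_meas hc
    hbar_meas.aestronglyMeasurable hbar_nonneg fun θ hθ => hbound θ fun hmem =>
      hθ.ne' (infDist_zero_of_mem (Set.mem_image_of_mem _ hmem)), ?_⟩
  refine tendsto_const_nhds.congr' ?_
  filter_upwards [eventually_gt_atTop 0] with R hR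
  rw [setIntegral_ball_of_homogeneous volume (by rw [finrank_euclideanSpace_fin]; omega) hhom
    hR.le, finrank_euclideanSpace_fin]
  have hpow : R ^ (3 - (2 * d : ℝ)) * R ^ (2 * d - 3) = 1 := by
    rw [← Real.rpow_natCast, ← Real.rpow_add hR, Nat.cast_sub (by omega)]
    push_cast
    rw [sub_add_sub_cancel', sub_self, Real.rpow_zero]
  rw [Nat.cast_sub (by omega)]
  push_cast
  field_simp
  rw [mul_assoc _ (R ^ _), hpow, mul_one]

/-- Integrability and asymptotics for a homogeneous function of degree `−3` on `ℝ^{2d}`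
whose restriction `h̄` to the unit sphere is bounded by `dist(·,Sigma)⁻²` near a closed set
`Sigma` of codimension `≥ 4` (encoded by the tube volume bound `μ_S({dist < ε}) ≤ c ε⁴`):
`h̄` is integrable on the sphere and
`lim_{R→∞} R^{3−d'} ∫_{B(0,R)} h = (1/(d'−3)) ∫_S h̄`, where `d' = 2d`. -/
theorem stmt_10 (d : ℕ) (hd : 4 ≤ d)
    (h : EuclideanSpace ℝ (Fin (2 * d)) → ℝ)
    (hbar : Metric.sphere (0 : EuclideanSpace ℝ (Fin (2 * d))) 1 → ℝ)
    (hbar_nonneg : ∀ θ, 0 ≤ hbar θ) (hbar_meas : Measurable hbar)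
    -- h is homogeneous of degree −3 with spherical part h̄:
    (hhom : ∀ (r : ℝ), 0 < r →
      ∀ θ : Metric.sphere (0 : EuclideanSpace ℝ (Fin (2 * d))) 1,
        h (r • (θ : EuclideanSpace ℝ (Fin (2 * d)))) = (r ^ 3)⁻¹ * hbar θ)
    (Sig : Set (Metric.sphere (0 : EuclideanSpace ℝ (Fin (2 * d))) 1))
    (hSigmaclosed : IsClosed Sig)
    -- Sigma has codimension ≥ 4 in the sphere: tube volume bound
    (c : ℝ) (hc : 0 < c)
    (htube : ∀ ε : ℝ, 0 < ε → ε ≤ 1 →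
      volume.toSphere {θ : Metric.sphere (0 : EuclideanSpace ℝ (Fin (2 * d))) 1 |
          Metric.infDist (θ : EuclideanSpace ℝ (Fin (2 * d)))
            ((↑) '' Sig : Set (EuclideanSpace ℝ (Fin (2 * d)))) < ε}
        ≤ ENNReal.ofReal (c * ε ^ 4))
    -- h̄ is bounded by dist(·,Sigma)⁻² off Sigma:
    (hbound : ∀ θ, θ ∉ Sig → hbar θ ≤ c / (Metric.infDist (θ : EuclideanSpace ℝ (Fin (2 * d)))
        ((↑) '' Sig : Set (EuclideanSpace ℝ (Fin (2 * d)))) ^ 2)) :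
    Integrable hbar volume.toSphere ∧
    Tendsto (fun R : ℝ => R ^ (3 - (2 * d : ℝ)) * ∫ x in ball (0 : EuclideanSpace ℝ (Fin (2 * d))) R, h x)
      atTop (nhds ((1 / ((2 * d : ℝ) - 3)) * ∫ θ, hbar θ ∂volume.toSphere)) :=
  stmt_10_general d hd h hbar hbar_nonneg hbar_meas hhom Sig c hc htube hbound
end

section
/- Let (M,g) be a complete Riemannian manifold of dimension d ≥ 3 whose Green kernel satisfies G(x,y) ≤ c·d(x,y)^{2−d}. Let o ∈ M, ρ(x) = d(o,x), and suppose f ≥ 0 is locally bounded with ∫_{B(o,R)} f ≤ c R^{d−3} for all R ≥ 1 and f(y) ≤ c/(ρ(y)·σ(y)²) for a function σ ≥ 1. Then the integral F₃(x) = ∫_{M \ B(o,2ρ(x))} d(x,y)^{2−d} f(y) dy satisfies F₃(x) ≤ C'/ρ(x) for all x with ρ(x) ≥ 10, for some constant C' depending only on c and d. (Dyadic decomposition estimate.) -/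
/-!
Split `M ∖ B(o, 2ρ)` into the dyadic annuli `B(o, 2^{k+2}ρ) ∖ B(o, 2^{k+1}ρ)`. On the `k`-th
annulus `d(x, y) ≥ 2^k ρ`, so the kernel is at most `(2^k ρ)^{2-d}`, while the mass of `f` there
is at most `c (2^{k+2} ρ)^{d-3}`. The product is `c 4^{d-3} / (2^k ρ)`: the exponents add up to
`-1`, so the annuli contribute a geometric series of ratio `1/2`.
-/

open Metric MeasureTheory

lemma Real.rpow_mul_mul_rpow_of_add_eq_neg_one {t a p q : ℝ} (ht : 0 < t) (ha : 0 ≤ a)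
    (hpq : p + q = -1) : t ^ p * (a * t) ^ q = a ^ q / t := by
  rw [Real.mul_rpow ha ht.le, mul_left_comm, ← Real.rpow_add ht, hpq, Real.rpow_neg_one,
    div_eq_mul_inv]

lemma tsum_ofReal_mul_geometric_two {B : ℝ} (hB : 0 ≤ B) :
    ∑' k : ℕ, ENNReal.ofReal (B * (1 / 2) ^ k) = ENNReal.ofReal (2 * B) := by
  rw [← ENNReal.ofReal_tsum_of_nonneg (fun k => by positivity)
    (summable_geometric_two.mul_left B), tsum_mul_left, tsum_geometric_two, mul_comm]

section DyadicAnnulus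

variable {M : Type*} [PseudoMetricSpace M]

def dyadicAnnulus (o : M) (r : ℝ) (k : ℕ) : Set M :=
  ball o (2 ^ (k + 1) * r) \ ball o (2 ^ k * r)

lemma compl_ball_subset_iUnion_dyadicAnnulus (o : M) {r : ℝ} (hr : 0 < r) :
    (ball o r)ᶜ ⊆ ⋃ k : ℕ, dyadicAnnulus o r k := by
  intro y hy
  have hy : 1 ≤ dist y o / r := (one_le_div hr).2 (by simpa using hy)
  obtain ⟨k, hk, hk'⟩ := exists_nat_pow_near hy one_lt_two
  refine Set.mem_iUnion.2 ⟨k, ?_, ?_⟩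
  · simpa using (div_lt_iff₀ hr).1 hk'
  · simpa using (le_div_iff₀ hr).1 hk

lemma le_dist_of_dist_le_of_two_mul_le_dist {o x y : M} {s : ℝ} (hx : dist o x ≤ s)
    (hy : 2 * s ≤ dist o y) : s ≤ dist x y := by
  linarith [dist_triangle o x y]

variable [MeasurableSpace M] {μ : Measure M}

lemma setLIntegral_compl_ball_le_tsum_dyadicAnnulus (o : M) {r : ℝ} (hr : 0 < r)
    (g : M → ENNReal) :
    ∫⁻ y in (ball o r)ᶜ, g y ∂μ ≤ ∑' k : ℕ, ∫⁻ y in dyadicAnnulus o r k, g y ∂μ :=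
  (lintegral_mono_set (compl_ball_subset_iUnion_dyadicAnnulus o hr)).trans
    (lintegral_iUnion_le _ _)

lemma setLIntegral_rpow_dist_mul_le {S : Set M} (hS : MeasurableSet S) {x : M} {t p : ℝ}
    (ht : 0 < t) (hp : p ≤ 0) (hdist : ∀ y ∈ S, t ≤ dist x y) (f : M → ℝ) :
    ∫⁻ y in S, ENNReal.ofReal (dist x y ^ p * f y) ∂μ
      ≤ ENNReal.ofReal (t ^ p) * ∫⁻ y in S, ENNReal.ofReal (f y) ∂μ := by
  rw [← lintegral_const_mul' _ _ ENNReal.ofReal_ne_top]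
  refine setLIntegral_mono' hS fun y hy => ?_
  rw [← ENNReal.ofReal_mul (by positivity)]
  by_cases hfy : 0 ≤ f y
  · exact ENNReal.ofReal_le_ofReal
      (mul_le_mul_of_nonneg_right (Real.rpow_le_rpow_of_nonpos ht (hdist y hy) hp) hfy)
  · rw [ENNReal.ofReal_of_nonpos (mul_nonpos_of_nonneg_of_nonpos (by positivity) (by linarith))]
    exact bot_le

variable [OpensMeasurableSpace M]

lemma measurableSet_dyadicAnnulus (o : M) (r : ℝ) (k : ℕ) :
    MeasurableSet (dyadicAnnulus o r k) :=
  measurableSet_ball.diff measurableSet_ball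

lemma setLIntegral_dyadicAnnulus_le {o x : M} {f : M → ℝ} {c p q : ℝ} (hp : p ≤ 0)
    (hpq : p + q = -1)
    (hF : ∀ R : ℝ, 1 ≤ R → ∫⁻ y in ball o R, ENNReal.ofReal (f y) ∂μ
      ≤ ENNReal.ofReal (c * R ^ q))
    (hx : 1 ≤ dist o x) (k : ℕ) :
    ∫⁻ y in dyadicAnnulus o (2 * dist o x) k, ENNReal.ofReal (dist x y ^ p * f y) ∂μ
      ≤ ENNReal.ofReal (c * 4 ^ q / dist o x * (1 / 2) ^ k) := by
  set t := 2 ^ k * dist o x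
  have ht : 0 < t := by positivity
  have ht1 : 1 ≤ 4 * t := by nlinarith [one_le_pow₀ (M₀ := ℝ) (n := k) one_le_two]
  have houter : 2 ^ (k + 1) * (2 * dist o x) = 4 * t := by ring
  have hdist : ∀ y ∈ dyadicAnnulus o (2 * dist o x) k, t ≤ dist x y := fun y hy =>
    le_dist_of_dist_le_of_two_mul_le_dist
      (le_mul_of_one_le_left dist_nonneg (one_le_pow₀ one_le_two))
      (by rw [dist_comm]; simpa [mul_left_comm] using hy.2)
  have hmass : ∫⁻ y in dyadicAnnulus o (2 * dist o x) k, ENNReal.ofReal (f y) ∂μ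
      ≤ ENNReal.ofReal (c * (4 * t) ^ q) :=
    (lintegral_mono_set (houter ▸ Set.sdiff_subset)).trans (hF _ ht1)
  calc _ ≤ ENNReal.ofReal (t ^ p) * ENNReal.ofReal (c * (4 * t) ^ q) :=
        (setLIntegral_rpow_dist_mul_le (measurableSet_dyadicAnnulus _ _ _) ht hp hdist f).trans
          (mul_le_mul_right hmass _)
    _ = ENNReal.ofReal (c * 4 ^ q / dist o x * (1 / 2) ^ k) := by
        rw [← ENNReal.ofReal_mul (by positivity), mul_left_comm,
          Real.rpow_mul_mul_rpow_of_add_eq_neg_one ht (by norm_num) hpq]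
        congr 1
        simp only [t, one_div_pow]
        field_simp

end DyadicAnnulus

/-- Dyadic decomposition estimate: on a metric measure space, if `f ≥ 0` satisfies
`∫_{B(o,R)} f ≤ c R^{d−3}` for `R ≥ 1` and `f(y) ≤ c/(ρ(y)σ(y)²)` with `σ ≥ 1`,
then `F₃(x) = ∫_{M∖B(o,2ρ(x))} d(x,y)^{2−d} f(y) dy ≤ C'/ρ(x)` whenever `ρ(x) ≥ 10`,
with `C'` depending only on `c` and `d`. -/
theorem stmt_12 (d : ℕ) (hd : 3 ≤ d) (c : ℝ) (hc : 0 < c) :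
    ∃ C' : ℝ, 0 < C' ∧
      ∀ (M : Type) [MetricSpace M] [MeasurableSpace M] [BorelSpace M] (μ : Measure M)
        (G : M → M → ℝ) (o : M) (σ f : M → ℝ),
        -- Green kernel estimate (Li–Yau):
        (∀ x y : M, G x y ≤ c * dist x y ^ (2 - (d : ℝ))) →
        (∀ y, 1 ≤ σ y) → (∀ y, 0 ≤ f y) →
        (∀ R : ℝ, 1 ≤ R →
          ∫⁻ y in ball o R, ENNReal.ofReal (f y) ∂μ
            ≤ ENNReal.ofReal (c * R ^ ((d : ℝ) - 3))) →
        (∀ y, f y ≤ c / (dist o y * σ y ^ 2)) →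
        ∀ x : M, 10 ≤ dist o x →
          ∫⁻ y in (ball o (2 * dist o x))ᶜ,
              ENNReal.ofReal (dist x y ^ (2 - (d : ℝ)) * f y) ∂μ
            ≤ ENNReal.ofReal (C' / dist o x) := by
  refine ⟨2 * (c * 4 ^ ((d : ℝ) - 3)), by positivity, ?_⟩
  intro M _ _ _ μ _ o _ f _ _ _ hF _ x hx
  have hp : 2 - (d : ℝ) ≤ 0 := by
    have : (3 : ℝ) ≤ d := by exact_mod_cast hd
    linarith
  calc _ ≤ ∑' k : ℕ, ∫⁻ y in dyadicAnnulus o (2 * dist o x) k,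
          ENNReal.ofReal (dist x y ^ (2 - (d : ℝ)) * f y) ∂μ :=
        setLIntegral_compl_ball_le_tsum_dyadicAnnulus o (by linarith) _
    _ ≤ ∑' k : ℕ, ENNReal.ofReal (c * 4 ^ ((d : ℝ) - 3) / dist o x * (1 / 2) ^ k) :=
        ENNReal.tsum_le_tsum fun k =>
          setLIntegral_dyadicAnnulus_le hp (by ring) hF (by linarith) k
    _ = _ := by
        rw [tsum_ofReal_mul_geometric_two (by positivity)]
        congr 1
        ring
end

section
/- Let F: ℝ^N × ℝ^M → ℝ^M be a polynomial map of total degree at most 2 in its arguments. Suppose at a point (q₀, w₀) one has ‖F(q₀, w₀)‖ ≤ ε, the partial differential D_w F(q₀, w₀) is invertible with ‖(D_w F(q₀,w₀))⁻¹‖ ≤ K, and the second-order coefficients of F are bounded by L. Then if ε is small enough (depending only on K, L), there exists a unique w with ‖w − w₀‖ ≤ 2Kε and F(q₀, w) = 0; moreover w depends smoothly on q₀ and ‖D_q w‖ ≤ 2K·‖D_q F(q₀, w₀)‖ + O(ε). -/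
open Filter Topology

section Helpers
open ContinuousLinearMap

section Aux
variable {E F : Type*} [NormedAddCommGroup E] [NormedSpace ℝ E]
  [NormedAddCommGroup F] [NormedSpace ℝ F]

private lemma quad_hasFDerivAt (c₀ : F) (ℓ : E →L[ℝ] F) (q : E →L[ℝ] E →L[ℝ] F) (p₀ : E) :
    HasFDerivAt (fun p => c₀ + ℓ p + q p p) (ℓ + (q p₀ + q.flip p₀)) p₀ := by
  have hb := (q.isBoundedBilinearMap).hasFDerivAt (p₀, p₀)
  have hdiag : HasFDerivAt (fun p : E => ((p, p) : E × E))
      ((ContinuousLinearMap.id ℝ E).prod (ContinuousLinearMap.id ℝ E)) p₀ :=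
    (hasFDerivAt_id p₀).prodMk (hasFDerivAt_id p₀)
  have h1 : HasFDerivAt (fun p : E => q p p)
      (((q.isBoundedBilinearMap).deriv (p₀, p₀)).comp
        ((ContinuousLinearMap.id ℝ E).prod (ContinuousLinearMap.id ℝ E))) p₀ :=
    HasFDerivAt.comp (f := fun p : E => ((p, p) : E × E)) (g := fun x : E × E => q x.1 x.2) p₀ hb hdiag
  have h2 := ((hasFDerivAt_const c₀ p₀).add ℓ.hasFDerivAt).add h1
  convert h2 using 1
  all_goals ext v
  all_goals simp [IsBoundedBilinearMap.deriv_apply]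

private lemma quad_key (c₀ : F) (ℓ : E →L[ℝ] F) (q : E →L[ℝ] E →L[ℝ] F) (p p' p₀ : E) :
    (c₀ + ℓ p + q p p) - (c₀ + ℓ p' + q p' p') - ((ℓ + (q p₀ + q.flip p₀)) (p - p'))
      = q (p - p') (p - p₀) + q (p' - p₀) (p - p') := by
  simp [map_sub, ContinuousLinearMap.sub_apply, ContinuousLinearMap.add_apply,
    ContinuousLinearMap.flip_apply]
  abel

private lemma quad_diff (ℓ : E →L[ℝ] F) (q : E →L[ℝ] E →L[ℝ] F) (p₁ p₀ x : E) :
    (ℓ + (q p₁ + q.flip p₁)) x - (ℓ + (q p₀ + q.flip p₀)) x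
      = q (p₁ - p₀) x + q x (p₁ - p₀) := by
  simp [map_sub, ContinuousLinearMap.sub_apply, ContinuousLinearMap.add_apply,
    ContinuousLinearMap.flip_apply]
  abel

end Aux

set_option maxHeartbeats 8000000 in
private lemma key {E Fm : Type*} [NormedAddCommGroup E] [NormedSpace ℝ E]
    [NormedAddCommGroup Fm] [NormedSpace ℝ Fm] [CompleteSpace E] [CompleteSpace Fm]
    (K L : ℝ) (hK : 0 < K) (hL : 0 ≤ L) :
    ∃ ε₀ C : ℝ, 0 < ε₀ ∧ 0 < C ∧
      ∀ (c₀ : Fm) (ℓ : (E × Fm) →L[ℝ] Fm) (q : (E × Fm) →L[ℝ] (E × Fm) →L[ℝ] Fm),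
      ‖q‖ ≤ L →
      ∀ F : E × Fm → Fm,
      (∀ p, F p = c₀ + ℓ p + q p p) →
      ∀ (q₀ : E) (w₀ : Fm) (ε : ℝ),
      0 ≤ ε → ε ≤ ε₀ → ‖F (q₀, w₀)‖ ≤ ε →
      ∀ T : Fm →L[ℝ] Fm,
      (fderiv ℝ (fun w => F (q₀, w)) w₀).comp T = ContinuousLinearMap.id ℝ _ →
      T.comp (fderiv ℝ (fun w => F (q₀, w)) w₀) = ContinuousLinearMap.id ℝ _ →
      ‖T‖ ≤ K →
      (∃! w : Fm, F (q₀, w) = 0 ∧ ‖w - w₀‖ ≤ 2 * K * ε) ∧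
      ∃ W : E → Fm,
        ContDiffAt ℝ (⊤ : ℕ∞) W q₀ ∧ F (q₀, W q₀) = 0 ∧ ‖W q₀ - w₀‖ ≤ 2 * K * ε ∧
        (∀ᶠ q' in 𝓝 q₀, F (q', W q') = 0) ∧
        ‖fderiv ℝ W q₀‖ ≤ 2 * K * ‖fderiv ℝ (fun q' => F (q', w₀)) q₀‖ + C * ε := by
  refine ⟨1 / (8 * L * K ^ 2 + 1), 8 * L * K ^ 2 + 1, by positivity, by positivity, ?_⟩
  intro c₀ ℓ q hq F hF q₀ w₀ ε hε0 hεε₀ hFε T hAT hTA hT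
  have hFeq : F = fun p => c₀ + ℓ p + q p p := funext hF
  subst hFeq
  set r : ℝ := 2 * K * ε with hr_def
  have hr0 : 0 ≤ r := by positivity
  have hsmall : 4 * L * K ^ 2 * ε ≤ 1 / 2 := by
    have h1 : ε * (8 * L * K ^ 2 + 1) ≤ 1 := by
      rw [← le_div_iff₀ (by positivity)] ; exact hεε₀
    nlinarith [mul_nonneg (mul_nonneg hL (sq_nonneg K)) hε0]
  set p₀ : E × Fm := (q₀, w₀) with hp₀
  set Dp : (E × Fm) →L[ℝ] Fm := ℓ + (q p₀ + q.flip p₀) with hDp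
  set F : E × Fm → Fm := fun p => c₀ + ℓ p + q p p with hFdef
  have hDF : HasFDerivAt F Dp p₀ := quad_hasFDerivAt c₀ ℓ q p₀
  have hinr : HasFDerivAt (fun w : Fm => ((q₀, w) : E × Fm))
      (ContinuousLinearMap.inr ℝ E Fm) w₀ := by
    have := (hasFDerivAt_const (𝕜 := ℝ) q₀ w₀).prodMk (hasFDerivAt_id (𝕜 := ℝ) w₀)
    convert this using 1
    all_goals ext <;> simp
  set A : Fm →L[ℝ] Fm := Dp.comp (ContinuousLinearMap.inr ℝ E Fm) with hA_def
  have hA : HasFDerivAt (fun w => F (q₀, w)) A w₀ :=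
    HasFDerivAt.comp (f := fun w : Fm => ((q₀, w) : E × Fm)) (g := F) w₀ hDF hinr
  have hfd : fderiv ℝ (fun w => F (q₀, w)) w₀ = A := hA.fderiv
  rw [hfd] at hAT hTA
  have hATpt : ∀ v, A (T v) = v := fun v => by
    have := ContinuousLinearMap.ext_iff.1 hAT v; simpa using this
  have hTApt : ∀ v, T (A v) = v := fun v => by
    have := ContinuousLinearMap.ext_iff.1 hTA v; simpa using this
  have hqb : ∀ x y, ‖q x y‖ ≤ L * ‖x‖ * ‖y‖ := fun x y => by
    refine (q.le_opNorm₂ x y).trans ?_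
    have := norm_nonneg x; have := norm_nonneg y
    gcongr
  have hTb : ∀ x, ‖T x‖ ≤ K * ‖x‖ := fun x =>
    (T.le_opNorm x).trans (mul_le_mul_of_nonneg_right hT (norm_nonneg x))
  have hnorm0 : ∀ v : Fm, ‖((0 : E), v)‖ = ‖v‖ := fun v => by
    simp [Prod.norm_def]
  have hnorm0' : ∀ u : E, ‖((u, (0 : Fm)) : E × Fm)‖ = ‖u‖ := fun u => by
    simp [Prod.norm_def]
  have keyW : ∀ w w' : Fm,
      F (q₀, w) - F (q₀, w') - A (w - w')
        = q ((0:E), w - w') ((0:E), w - w₀) + q ((0:E), w' - w₀) ((0:E), w - w') := by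
    intro w w'
    have h := quad_key c₀ ℓ q ((q₀, w) : E × Fm) ((q₀, w') : E × Fm) p₀
    have e1 : ((q₀, w) : E × Fm) - (q₀, w') = ((0 : E), w - w') := by
      simp [Prod.mk_sub_mk]
    have e2 : ((q₀, w) : E × Fm) - p₀ = ((0 : E), w - w₀) := by
      simp [hp₀, Prod.mk_sub_mk]
    have e3 : ((q₀, w') : E × Fm) - p₀ = ((0 : E), w' - w₀) := by
      simp [hp₀, Prod.mk_sub_mk]
    rw [e1, e2, e3] at h
    have e4 : A (w - w') = (ℓ + (q p₀ + q.flip p₀)) ((0 : E), w - w') := by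
      simp [hA_def, hDp]
    rw [show (F (q₀, w) : Fm) = c₀ + ℓ (q₀, w) + q (q₀, w) (q₀, w) from rfl,
      show (F (q₀, w') : Fm) = c₀ + ℓ (q₀, w') + q (q₀, w') (q₀, w') from rfl, e4]
    exact h
  have keyB : ∀ w w' : Fm, ‖w - w₀‖ ≤ r → ‖w' - w₀‖ ≤ r →
      ‖(w - T (F (q₀, w))) - (w' - T (F (q₀, w')))‖ ≤ 1 / 2 * ‖w - w'‖ := by
    intro w w' hw hw'
    have h1 : (w - T (F (q₀, w))) - (w' - T (F (q₀, w')))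
        = T (A (w - w') - (F (q₀, w) - F (q₀, w'))) := by
      rw [map_sub, hTApt, map_sub]
      abel
    rw [h1]
    have h3 : ‖A (w - w') - (F (q₀, w) - F (q₀, w'))‖ ≤ 2 * L * r * ‖w - w'‖ := by
      have heq : A (w - w') - (F (q₀, w) - F (q₀, w'))
          = -(q ((0:E), w - w') ((0:E), w - w₀) + q ((0:E), w' - w₀) ((0:E), w - w')) := by
        rw [← keyW w w']; abel
      rw [heq, norm_neg]
      have b1 := hqb ((0:E), w - w') ((0:E), w - w₀)
      have b2 := hqb ((0:E), w' - w₀) ((0:E), w - w')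
      rw [hnorm0, hnorm0] at b1 b2
      calc ‖q ((0:E), w - w') ((0:E), w - w₀) + q ((0:E), w' - w₀) ((0:E), w - w')‖
          ≤ ‖q ((0:E), w - w') ((0:E), w - w₀)‖ + ‖q ((0:E), w' - w₀) ((0:E), w - w')‖ :=
            norm_add_le _ _
        _ ≤ L * ‖w - w'‖ * ‖w - w₀‖ + L * ‖w' - w₀‖ * ‖w - w'‖ := add_le_add b1 b2
        _ ≤ 2 * L * r * ‖w - w'‖ := by
            nlinarith [norm_nonneg (w - w'), norm_nonneg (w - w₀), norm_nonneg (w' - w₀),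
              mul_nonneg hL (norm_nonneg (w - w'))]
    calc ‖T (A (w - w') - (F (q₀, w) - F (q₀, w')))‖
        ≤ K * ‖A (w - w') - (F (q₀, w) - F (q₀, w'))‖ := hTb _
      _ ≤ K * (2 * L * r * ‖w - w'‖) := mul_le_mul_of_nonneg_left h3 hK.le
      _ ≤ 1 / 2 * ‖w - w'‖ := by
          rw [hr_def]
          nlinarith [norm_nonneg (w - w'), hsmall, mul_nonneg (norm_nonneg (w - w')) hε0]
  set Φ : Fm → Fm := fun w => w - T (F (q₀, w)) with hΦ
  have hball : ∀ w : Fm, ‖w - w₀‖ ≤ r → ‖Φ w - w₀‖ ≤ r := by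
    intro w hw
    have h0 : ‖Φ w₀ - w₀‖ ≤ K * ε := by
      have he : Φ w₀ - w₀ = -(T (F (q₀, w₀))) := by simp [hΦ]
      rw [he, norm_neg]
      exact (hTb _).trans (by nlinarith)
    have h1 : ‖Φ w - Φ w₀‖ ≤ 1 / 2 * ‖w - w₀‖ :=
      keyB w w₀ hw (by simp [hr0])
    have htri : ‖Φ w - w₀‖ ≤ ‖Φ w - Φ w₀‖ + ‖Φ w₀ - w₀‖ := by
      have := dist_triangle (Φ w) (Φ w₀) w₀
      simpa [dist_eq_norm] using this
    rw [hr_def] at hw ⊢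
    nlinarith [hw]
  have hclosed : IsClosed (Metric.closedBall w₀ r) := Metric.isClosed_closedBall
  haveI : CompleteSpace (Metric.closedBall w₀ r) := hclosed.completeSpace_coe
  haveI : Nonempty (Metric.closedBall w₀ r) := ⟨⟨w₀, Metric.mem_closedBall_self hr0⟩⟩
  have hmem : ∀ w : Fm, ‖w - w₀‖ ≤ r → w ∈ Metric.closedBall w₀ r := fun w h => by
    simpa [Metric.mem_closedBall, dist_eq_norm] using h
  have hmem' : ∀ x : Metric.closedBall w₀ r, ‖(x : Fm) - w₀‖ ≤ r := fun x => by
    have h := x.2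
    rw [Metric.mem_closedBall, dist_eq_norm] at h
    exact h
  set φ : Metric.closedBall w₀ r → Metric.closedBall w₀ r :=
    fun x => ⟨Φ x, hmem _ (hball _ (hmem' x))⟩ with hφ
  have hcontr : ContractingWith (1/2 : NNReal) φ := by
    refine ⟨by rw [← NNReal.coe_lt_coe]; norm_num, ?_⟩
    refine LipschitzWith.of_dist_le_mul fun x y => ?_
    rw [Subtype.dist_eq, Subtype.dist_eq, dist_eq_norm, dist_eq_norm]
    have hkb := keyB x y (hmem' x) (hmem' y)
    push_cast
    simpa [hφ, hΦ] using hkb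
  set xs : Metric.closedBall w₀ r := ContractingWith.fixedPoint φ hcontr with hxs
  have hfix : φ xs = xs := hcontr.fixedPoint_isFixedPt
  have hTF0 : T (F (q₀, (xs : Fm))) = 0 := by
    have h2 : (xs : Fm) - T (F (q₀, (xs : Fm))) = (xs : Fm) := by
      have := congrArg Subtype.val hfix
      simpa [hφ, hΦ] using this
    exact sub_eq_self.mp h2
  have hF0 : F (q₀, (xs : Fm)) = 0 := by
    have := hATpt (F (q₀, (xs : Fm)))
    rw [hTF0, map_zero] at this
    exact this.symm
  have huniq : ∀ w' : Fm, F (q₀, w') = 0 ∧ ‖w' - w₀‖ ≤ r → w' = (xs : Fm) := by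
    rintro w' ⟨h0, hrw'⟩
    have hmemw' := hmem w' hrw'
    have hfix' : φ ⟨w', hmemw'⟩ = ⟨w', hmemw'⟩ := by
      apply Subtype.ext
      simp [hφ, hΦ, h0]
    have hu := hcontr.fixedPoint_unique (x := ⟨w', hmemw'⟩) hfix'
    rw [← hxs] at hu
    exact congrArg Subtype.val hu
  refine ⟨⟨(xs : Fm), ⟨hF0, hmem' xs⟩, fun w' hw' => huniq w' hw'⟩, ?_⟩
  -- Part 2: smooth dependence on the parameter
  set ws : Fm := (xs : Fm) with hws
  set ps : E × Fm := (q₀, ws) with hps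
  have hrs : ‖ws - w₀‖ ≤ r := hmem' xs
  set Dp' : (E × Fm) →L[ℝ] Fm := ℓ + (q ps + q.flip ps) with hDp'
  have hDF' : HasFDerivAt F Dp' ps := quad_hasFDerivAt c₀ ℓ q ps
  set A' : Fm →L[ℝ] Fm := Dp'.comp (ContinuousLinearMap.inr ℝ E Fm) with hA'def
  set B' : E →L[ℝ] Fm := Dp'.comp (ContinuousLinearMap.inl ℝ E Fm) with hB'def
  set B : E →L[ℝ] Fm := Dp.comp (ContinuousLinearMap.inl ℝ E Fm) with hBdef
  have hinl : HasFDerivAt (fun u : E => ((u, w₀) : E × Fm))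
      (ContinuousLinearMap.inl ℝ E Fm) q₀ := by
    have := (hasFDerivAt_id (𝕜 := ℝ) q₀).prodMk (hasFDerivAt_const (𝕜 := ℝ) w₀ q₀)
    convert this using 1
    all_goals ext <;> simp
  have hBf : fderiv ℝ (fun q' => F (q', w₀)) q₀ = B :=
    (HasFDerivAt.comp (f := fun u : E => ((u, w₀) : E × Fm)) (g := F) q₀ hDF hinl).fderiv
  have hpsd : ps - p₀ = ((0 : E), ws - w₀) := by
    simp [hps, hp₀, Prod.mk_sub_mk]
  have hDdiff : ∀ x : E × Fm, ‖Dp' x - Dp x‖ ≤ 2 * L * r * ‖x‖ := by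
    intro x
    have h := quad_diff ℓ q ps p₀ x
    rw [hpsd] at h
    rw [hDp', hDp, h]
    have b1 := hqb ((0:E), ws - w₀) x
    have b2 := hqb x ((0:E), ws - w₀)
    rw [hnorm0] at b1 b2
    calc ‖q ((0:E), ws - w₀) x + q x ((0:E), ws - w₀)‖
        ≤ ‖q ((0:E), ws - w₀) x‖ + ‖q x ((0:E), ws - w₀)‖ := norm_add_le _ _
      _ ≤ L * ‖ws - w₀‖ * ‖x‖ + L * ‖x‖ * ‖ws - w₀‖ := add_le_add b1 b2
      _ ≤ 2 * L * r * ‖x‖ := by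
          nlinarith [norm_nonneg x, norm_nonneg (ws - w₀), mul_nonneg hL (norm_nonneg x)]
  have hA'A : ∀ w : Fm, ‖A' w - A w‖ ≤ 2 * L * r * ‖w‖ := fun w => by
    have h := hDdiff ((0:E), w)
    rw [hnorm0] at h
    simpa [hA'def, hA_def] using h
  have hB'B : ∀ u : E, ‖B' u - B u‖ ≤ 2 * L * r * ‖u‖ := fun u => by
    have h := hDdiff ((u, (0:Fm)))
    rw [hnorm0'] at h
    simpa [hB'def, hBdef] using h
  set Δ : Fm →L[ℝ] Fm := A' - A with hΔdef
  have hΔ : ‖Δ‖ ≤ 2 * L * r :=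
    ContinuousLinearMap.opNorm_le_bound _ (by positivity) fun w => by
      simpa [hΔdef] using hA'A w
  set s₀ : Fm →L[ℝ] Fm := T * Δ with hs₀def
  have hs₀ : ‖s₀‖ ≤ 1 / 2 := by
    have h1 : ‖s₀‖ ≤ ‖T‖ * ‖Δ‖ := norm_mul_le _ _
    have h2 : ‖T‖ * ‖Δ‖ ≤ K * (2 * L * r) :=
      mul_le_mul hT hΔ (norm_nonneg _) hK.le
    rw [hr_def] at h2
    nlinarith [hsmall]
  have hs₀1 : ‖-s₀‖ < 1 := by rw [norm_neg]; linarith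
  set u : (Fm →L[ℝ] Fm)ˣ := Units.oneSub (-s₀) hs₀1 with hu_def
  have hu_val : (u : Fm →L[ℝ] Fm) = 1 + s₀ := by
    rw [hu_def, Units.val_oneSub, sub_neg_eq_add]
  set v : Fm →L[ℝ] Fm := ((u⁻¹ : (Fm →L[ℝ] Fm)ˣ) : Fm →L[ℝ] Fm) with hv_def
  have huv : (1 + s₀) * v = 1 := by rw [← hu_val, hv_def]; exact u.mul_inv
  have hvu : v * (1 + s₀) = 1 := by rw [← hu_val, hv_def]; exact u.inv_mul
  have hv2 : ‖v‖ ≤ 2 := by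
    have hveq : v = 1 - v * s₀ := by
      have h := hvu
      rw [mul_add, mul_one] at h
      exact eq_sub_of_add_eq h
    have hone : ‖(1 : Fm →L[ℝ] Fm)‖ ≤ 1 := ContinuousLinearMap.norm_id_le
    have h2 : ‖v * s₀‖ ≤ ‖v‖ * ‖s₀‖ := norm_mul_le _ _
    have h3 : ‖v‖ * ‖s₀‖ ≤ ‖v‖ * (1 / 2) :=
      mul_le_mul_of_nonneg_left hs₀ (norm_nonneg v)
    have h4 : ‖v‖ ≤ ‖(1 : Fm →L[ℝ] Fm)‖ + ‖v * s₀‖ := by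
      conv_lhs => rw [hveq]
      exact norm_sub_le _ _
    linarith
  set Rr : Fm →L[ℝ] Fm := v * T with hRdef
  have hRb : ∀ x, ‖Rr x‖ ≤ 2 * K * ‖x‖ := fun x => by
    have h1 : ‖Rr x‖ ≤ ‖v‖ * ‖T x‖ := by
      rw [hRdef, ContinuousLinearMap.mul_apply]
      exact v.le_opNorm _
    calc ‖Rr x‖ ≤ ‖v‖ * ‖T x‖ := h1
      _ ≤ 2 * (K * ‖x‖) := mul_le_mul hv2 (hTb x) (norm_nonneg _) (by norm_num)
      _ = 2 * K * ‖x‖ := by ring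
  have hATm : A * T = 1 := by
    ext x
    simp [ContinuousLinearMap.mul_apply, hATpt x]
  have hTAm : T * A = 1 := by
    ext x
    simp [ContinuousLinearMap.mul_apply, hTApt x]
  have hA'm : A' = A * (1 + s₀) := by
    have h1 : A * (1 + s₀) = A + (A * T) * Δ := by
      rw [mul_add, mul_one, hs₀def, ← mul_assoc]
    rw [h1, hATm, one_mul, hΔdef]
    abel
  have hRA' : Rr * A' = 1 := by
    calc Rr * A' = v * T * (A * (1 + s₀)) := by rw [hRdef, hA'm]
      _ = v * (T * (A * (1 + s₀))) := mul_assoc v T _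
      _ = v * (T * A * (1 + s₀)) := by rw [← mul_assoc T A _]
      _ = v * (1 + s₀) := by rw [hTAm, one_mul]
      _ = 1 := hvu
  have hA'R : A' * Rr = 1 := by
    calc A' * Rr = A * (1 + s₀) * (v * T) := by rw [hRdef, hA'm]
      _ = A * ((1 + s₀) * (v * T)) := mul_assoc _ _ _
      _ = A * ((1 + s₀) * v * T) := by rw [← mul_assoc (1 + s₀) v T]
      _ = A * T := by rw [huv, one_mul]
      _ = 1 := hATm
  have hRA'pt : ∀ x, Rr (A' x) = x := fun x => by
    have h := congrArg (fun (f : Fm →L[ℝ] Fm) => f x) hRA'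
    simpa [ContinuousLinearMap.mul_apply] using h
  have hA'Rpt : ∀ x, A' (Rr x) = x := fun x => by
    have h := congrArg (fun (f : Fm →L[ℝ] Fm) => f x) hA'R
    simpa [ContinuousLinearMap.mul_apply] using h
  have hsplit : ∀ (a : E) (b : Fm), Dp' (a, b) = B' a + A' b := by
    intro a b
    have hab : ((a, b) : E × Fm) = (a, 0) + (0, b) := by simp
    rw [hab, map_add, hB'def, hA'def]
    simp
  set dGL : (E × Fm) →L[ℝ] (E × Fm) := (ContinuousLinearMap.fst ℝ E Fm).prod Dp' with hdGL
  set dGinv : (E × Fm) →L[ℝ] (E × Fm) :=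
    (ContinuousLinearMap.fst ℝ E Fm).prod
      (Rr.comp ((ContinuousLinearMap.snd ℝ E Fm) -
        B'.comp (ContinuousLinearMap.fst ℝ E Fm))) with hdGinv
  have hdGinv_apply : ∀ y : E × Fm, dGinv y = (y.1, Rr (y.2 - B' y.1)) := fun y => by
    simp [hdGinv]
  have hleft : Function.LeftInverse dGinv dGL := by
    intro p
    have h1 : dGL p = (p.1, Dp' p) := by simp [hdGL]
    rw [h1, hdGinv_apply]
    have h3 : Dp' p - B' p.1 = A' p.2 := by
      rw [show Dp' p = B' p.1 + A' p.2 from hsplit p.1 p.2]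
      abel
    simp only [h3, hRA'pt]
  have hright : Function.RightInverse dGinv dGL := by
    intro y
    rw [hdGinv_apply]
    have h1 : dGL ((y.1, Rr (y.2 - B' y.1)) : E × Fm)
        = (y.1, Dp' (y.1, Rr (y.2 - B' y.1))) := by simp [hdGL]
    rw [h1, hsplit, hA'Rpt]
    have h2 : B' y.1 + (y.2 - B' y.1) = y.2 := by abel
    rw [h2]
  set dG : (E × Fm) ≃L[ℝ] (E × Fm) :=
    ContinuousLinearEquiv.equivOfInverse dGL dGinv hleft hright with hdG
  set G : E × Fm → E × Fm := fun p => (p.1, F p) with hG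
  have hFc : ContDiff ℝ (⊤ : ℕ∞) F :=
    (contDiff_const.add ℓ.contDiff).add
      ((q.isBoundedBilinearMap.contDiff).comp (contDiff_id.prodMk contDiff_id))
  have hGc : ContDiffAt ℝ (⊤ : ℕ∞) G ps := (contDiff_fst.prodMk hFc).contDiffAt
  have hGd0 : HasFDerivAt G dGL ps := hasFDerivAt_fst.prodMk hDF'
  have hdGcoe : (dG : (E × Fm) →L[ℝ] (E × Fm)) = dGL :=
    ContinuousLinearMap.ext fun x => by
      rw [ContinuousLinearEquiv.coe_coe, hdG, ContinuousLinearEquiv.equivOfInverse_apply]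
  have hGd : HasFDerivAt G (dG : (E × Fm) →L[ℝ] (E × Fm)) ps := hdGcoe ▸ hGd0
  have hGs : HasStrictFDerivAt G (dG : (E × Fm) →L[ℝ] (E × Fm)) ps :=
    hGc.hasStrictFDerivAt' hGd (by simp)
  set inv : E × Fm → E × Fm := hGs.localInverse G dG ps with hinv
  have hGps : G ps = ((q₀, (0 : Fm)) : E × Fm) := by
    simp [hG, hps, hF0]
    exact hF0
  have hinv_ps : inv ((q₀, (0:Fm)) : E × Fm) = ps := by
    have h := hGs.localInverse_apply_image
    rw [hGps] at h
    exact h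
  set W : E → Fm := fun q' => (inv ((q', (0:Fm)) : E × Fm)).2 with hW
  have hWq₀ : W q₀ = ws := by
    simp [hW, hinv_ps, hps]
  have hinvc : ContDiffAt ℝ (⊤ : ℕ∞) inv ((q₀, (0:Fm)) : E × Fm) := by
    have h := hGc.to_localInverse hGd (by simp)
    rw [hGps] at h
    exact h
  have hWc : ContDiffAt ℝ (⊤ : ℕ∞) W q₀ := by
    have h1 : ContDiffAt ℝ (⊤ : ℕ∞) (fun q' : E => ((q', (0:Fm)) : E × Fm)) q₀ :=
      (contDiff_id.prodMk contDiff_const).contDiffAt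
    exact contDiffAt_snd.comp q₀ (hinvc.comp q₀ h1)
  have hev : ∀ᶠ y in 𝓝 ((q₀, (0:Fm)) : E × Fm), G (inv y) = y := by
    have h := hGs.eventually_right_inverse
    rwa [hGps] at h
  have htend : Tendsto (fun q' : E => ((q', (0:Fm)) : E × Fm)) (𝓝 q₀) (𝓝 ((q₀, (0:Fm)) : E × Fm)) :=
    Continuous.tendsto' (continuous_id.prodMk continuous_const) _ _ rfl
  have hev2 : ∀ᶠ q' in 𝓝 q₀, F (q', W q') = 0 := by
    filter_upwards [htend.eventually hev] with q' hq'
    have h1 : (inv ((q', (0:Fm)) : E × Fm)).1 = q' := congrArg Prod.fst hq'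
    have h2 : F (inv ((q', (0:Fm)) : E × Fm)) = 0 := congrArg Prod.snd hq'
    have h3 : ((q', W q') : E × Fm) = inv ((q', (0:Fm)) : E × Fm) := Prod.ext h1.symm rfl
    rw [h3]
    exact h2
  have hinvd : HasFDerivAt inv ((dG.symm : (E × Fm) →L[ℝ] (E × Fm))) ((q₀, (0:Fm)) : E × Fm) := by
    have h := hGs.to_localInverse
    rw [hGps] at h
    exact h.hasFDerivAt
  have hWd : HasFDerivAt W ((ContinuousLinearMap.snd ℝ E Fm).comp
      (((dG.symm : (E × Fm) →L[ℝ] (E × Fm))).comp (ContinuousLinearMap.inl ℝ E Fm))) q₀ := by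
    have h1 : HasFDerivAt (fun q' : E => ((q', (0:Fm)) : E × Fm))
        (ContinuousLinearMap.inl ℝ E Fm) q₀ := by
      have := (hasFDerivAt_id (𝕜 := ℝ) q₀).prodMk (hasFDerivAt_const (𝕜 := ℝ) (0:Fm) q₀)
      convert this using 1
      all_goals ext <;> simp
    have h2 := HasFDerivAt.comp (f := fun q' : E => ((q', (0:Fm)) : E × Fm))
      (g := inv) q₀ hinvd h1
    exact HasFDerivAt.comp (f := fun q' : E => inv ((q', (0:Fm)) : E × Fm))
      (g := Prod.snd) q₀ hasFDerivAt_snd h2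
  have hfdW : fderiv ℝ W q₀ = (ContinuousLinearMap.snd ℝ E Fm).comp
      (((dG.symm : (E × Fm) →L[ℝ] (E × Fm))).comp (ContinuousLinearMap.inl ℝ E Fm)) := hWd.fderiv
  have hsymm : ((dG.symm : (E × Fm) →L[ℝ] (E × Fm))) = dGinv :=
    ContinuousLinearMap.ext fun x => by
      rw [ContinuousLinearEquiv.coe_coe, hdG, ContinuousLinearEquiv.symm_equivOfInverse,
        ContinuousLinearEquiv.equivOfInverse_apply]
  refine ⟨W, hWc, ?_, ?_, hev2, ?_⟩
  · rw [hWq₀]; exact hF0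
  · rw [hWq₀]; exact hrs
  · rw [hfdW, hsymm, hBf]
    have hbound : ∀ x : E, ‖((ContinuousLinearMap.snd ℝ E Fm).comp
        (dGinv.comp (ContinuousLinearMap.inl ℝ E Fm))) x‖
          ≤ (2 * K * ‖B‖ + (8 * L * K ^ 2 + 1) * ε) * ‖x‖ := by
      intro x
      have h1 : ((ContinuousLinearMap.snd ℝ E Fm).comp
          (dGinv.comp (ContinuousLinearMap.inl ℝ E Fm))) x = Rr ((0:Fm) - B' x) := by
        simp [hdGinv_apply]
      rw [h1, zero_sub, map_neg, norm_neg]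
      have h3 : ‖B' x‖ ≤ ‖B‖ * ‖x‖ + 2 * L * r * ‖x‖ := by
        calc ‖B' x‖ = ‖B x + (B' x - B x)‖ := by rw [add_sub_cancel]
          _ ≤ ‖B x‖ + ‖B' x - B x‖ := norm_add_le _ _
          _ ≤ ‖B‖ * ‖x‖ + 2 * L * r * ‖x‖ := add_le_add (B.le_opNorm x) (hB'B x)
      calc ‖Rr (B' x)‖ ≤ 2 * K * ‖B' x‖ := hRb _
        _ ≤ 2 * K * (‖B‖ * ‖x‖ + 2 * L * r * ‖x‖) :=
            mul_le_mul_of_nonneg_left h3 (by positivity)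
        _ ≤ (2 * K * ‖B‖ + (8 * L * K ^ 2 + 1) * ε) * ‖x‖ := by
            rw [hr_def]
            nlinarith [norm_nonneg x, norm_nonneg B, mul_nonneg hε0 (norm_nonneg x),
              mul_nonneg (mul_nonneg hL hK.le) (mul_nonneg hε0 (norm_nonneg x))]
    exact ContinuousLinearMap.opNorm_le_bound _ (by positivity) hbound


end Helpers

/-- Quantitative implicit function theorem for quadratic maps: if
`F(p) = c₀ + ℓ(p) + q(p,p)` with `‖q‖ ≤ L`, `‖F(q₀,w₀)‖ ≤ ε`, and `D_wF(q₀,w₀)` is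
invertible with inverse of norm `≤ K`, then for `ε` small (depending only on `K, L`)
there is a unique `w` with `‖w − w₀‖ ≤ 2Kε` and `F(q₀,w) = 0`; moreover the solution
depends smoothly on the parameter with `‖D_q w‖ ≤ 2K‖D_qF(q₀,w₀)‖ + Cε`. -/
theorem stmt_18 (N M : ℕ) (K L : ℝ) (hK : 0 < K) (hL : 0 ≤ L) :
    ∃ ε₀ C : ℝ, 0 < ε₀ ∧ 0 < C ∧
      ∀ (c₀ : EuclideanSpace ℝ (Fin M))
        (ℓ : (EuclideanSpace ℝ (Fin N) × EuclideanSpace ℝ (Fin M)) →L[ℝ] EuclideanSpace ℝ (Fin M))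
        (q : (EuclideanSpace ℝ (Fin N) × EuclideanSpace ℝ (Fin M)) →L[ℝ]
          (EuclideanSpace ℝ (Fin N) × EuclideanSpace ℝ (Fin M)) →L[ℝ] EuclideanSpace ℝ (Fin M)),
      ‖q‖ ≤ L →
      ∀ F : EuclideanSpace ℝ (Fin N) × EuclideanSpace ℝ (Fin M) → EuclideanSpace ℝ (Fin M),
      (∀ p, F p = c₀ + ℓ p + q p p) →
      ∀ (q₀ : EuclideanSpace ℝ (Fin N)) (w₀ : EuclideanSpace ℝ (Fin M)) (ε : ℝ),
      0 ≤ ε → ε ≤ ε₀ → ‖F (q₀, w₀)‖ ≤ ε →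
      ∀ T : EuclideanSpace ℝ (Fin M) →L[ℝ] EuclideanSpace ℝ (Fin M),
      (fderiv ℝ (fun w => F (q₀, w)) w₀).comp T = ContinuousLinearMap.id ℝ _ →
      T.comp (fderiv ℝ (fun w => F (q₀, w)) w₀) = ContinuousLinearMap.id ℝ _ →
      ‖T‖ ≤ K →
      (∃! w : EuclideanSpace ℝ (Fin M), F (q₀, w) = 0 ∧ ‖w - w₀‖ ≤ 2 * K * ε) ∧
      ∃ W : EuclideanSpace ℝ (Fin N) → EuclideanSpace ℝ (Fin M),
        ContDiffAt ℝ (⊤ : ℕ∞) W q₀ ∧ F (q₀, W q₀) = 0 ∧ ‖W q₀ - w₀‖ ≤ 2 * K * ε ∧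
        (∀ᶠ q' in 𝓝 q₀, F (q', W q') = 0) ∧
        ‖fderiv ℝ W q₀‖ ≤ 2 * K * ‖fderiv ℝ (fun q' => F (q', w₀)) q₀‖ + C * ε := by
  exact key K L hK hL
end
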